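/- arXiv:1510.00003 — 8 statements merged into one kernel-verified Lean document; each statement's English description precedes it below -/
import Mathlib

section
/- The function g has no local maximum point at which it is finite: there is no point x₀ ∈ ℝ with g(x₀) < ∞ such that g(x) ≤ g(x₀) for all x in some open neighborhood of x₀. -/
/-!
If `g ≤ g(x₀)` on `(x₀ - t, x₀ + t)`, the mean of `g` over that interval is at most `g(x₀)`.
By Tonelli that mean is the `ρ`-integral of `(s² + 1)` times the mean of `τ ↦ 1/(τ - s)²`, and
the latter strictly exceeds the value `1/(x₀ - s)²` at the centre: it is `1/((x₀ - s)² - t²)`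
when `|x₀ - s| > t` and `+∞` otherwise. As `g(x₀) < ∞` forces `s ≠ x₀` for `ρ`-a.e. `s` and
`ρ ≠ 0`, the mean of `g` strictly exceeds `g(x₀)`. Tonelli applies because `g(x₀) < ∞` already makes
`ρ` finite, by `(x₀ - s)² ≤ (1 + x₀²)(1 + s²)`.
-/

open MeasureTheory

/-- The function `g(x) = ∫ (s²+1)/(x−s)² dρ(s)`, valued in `[0,∞]`; the integrand is `+∞`
at `s = x` (since in `ℝ≥0∞`, division of a nonzero quantity by `0` yields `∞`). -/
noncomputable def gFn (ρ : Measure ℝ) (x : ℝ) : ENNReal :=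
  ∫⁻ s, ENNReal.ofReal (s ^ 2 + 1) / ENNReal.ofReal ((x - s) ^ 2) ∂ρ

open Set Asymptotics intervalIntegral
open scoped Interval

theorem integral_inv_sq_sub {a b s : ℝ} (hs : s ∉ [[a, b]]) :
    ∫ τ in a..b, ((τ - s) ^ 2)⁻¹ = (a - s)⁻¹ - (b - s)⁻¹ := by
  have h0 : (0 : ℝ) ∉ [[a - s, b - s]] := by
    simpa only [mem_uIcc, sub_nonneg, sub_nonpos] using hs
  have hpow (y : ℝ) : (y ^ 2)⁻¹ = y ^ (-2 : ℤ) := by simp [zpow_neg]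
  simp_rw [hpow]
  rw [integral_comp_sub_right (· ^ (-2 : ℤ)) s, integral_zpow (.inr ⟨by norm_num, h0⟩)]
  norm_num
  ring

theorem not_intervalIntegrable_inv_sq_sub {a b s : ℝ} (hab : a ≠ b) (hs : s ∈ [[a, b]]) :
    ¬ IntervalIntegrable (fun τ => ((τ - s) ^ 2)⁻¹) volume a b := by
  refine not_intervalIntegrable_of_sub_inv_isBigO_punctured (IsBigO.of_bound 1 ?_) hab hs
  filter_upwards [self_mem_nhdsWithin, nhdsWithin_le_nhds (Metric.ball_mem_nhds s one_pos)]
    with τ hne hτ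
  rw [Metric.mem_ball, Real.dist_eq] at hτ
  have hpos : 0 < |τ - s| := abs_pos.2 (sub_ne_zero.2 hne)
  simp only [norm_inv, norm_pow, Real.norm_eq_abs, one_mul]
  exact inv_anti₀ (by positivity) (by nlinarith)

theorem intervalIntegrable_inv_sq_sub {a b s : ℝ} (hs : s ∉ [[a, b]]) :
    IntervalIntegrable (fun τ => ((τ - s) ^ 2)⁻¹) volume a b := by
  refine ((continuous_sub_right s).continuousOn.pow 2).inv₀ (fun τ hτ => ?_) |>.intervalIntegrable
  exact pow_ne_zero 2 (sub_ne_zero.2 (ne_of_mem_of_not_mem hτ hs))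

theorem two_mul_div_sq_lt_inv_sub_sub_inv_add {u t : ℝ} (ht : 0 < t) (htu : t < |u|) :
    2 * t / u ^ 2 < (u - t)⁻¹ - (u + t)⁻¹ := by
  have htu2 : t ^ 2 < u ^ 2 := by
    simpa only [sq_abs] using pow_lt_pow_left₀ htu ht.le two_ne_zero
  have hsub : u - t ≠ 0 := fun h => by nlinarith
  have hadd : u + t ≠ 0 := fun h => by nlinarith
  have hsq : u ^ 2 - t ^ 2 ≠ 0 := by linarith
  calc 2 * t / u ^ 2 < 2 * t / (u ^ 2 - t ^ 2) :=
        div_lt_div_of_pos_left (by positivity) (by linarith) (sub_lt_self _ (by positivity))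
    _ = (u - t)⁻¹ - (u + t)⁻¹ := by
        field_simp
        ring

theorem ofReal_two_mul_inv_sq_lt_setLIntegral_Ioo {x s t : ℝ} (ht : 0 < t) (hxs : x ≠ s) :
    ENNReal.ofReal (2 * t) * (ENNReal.ofReal ((x - s) ^ 2))⁻¹ <
      ∫⁻ τ in Ioo (x - t) (x + t), (ENNReal.ofReal ((τ - s) ^ 2))⁻¹ := by
  have hlt : x - t < x + t := by linarith
  have hxs' : 0 < (x - s) ^ 2 := by positivity
  refine lt_of_lt_of_le ?_ (setLIntegral_mono' measurableSet_Ioo fun τ _ => ENNReal.ofReal_inv_le)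
  have hnonneg : 0 ≤ᵐ[volume.restrict (Ioo (x - t) (x + t))] fun τ => ((τ - s) ^ 2)⁻¹ :=
    ae_of_all _ fun τ => by positivity
  by_cases hs : |x - s| ≤ t
  · have hnot := not_intervalIntegrable_inv_sq_sub hlt.ne
      (by rwa [uIcc_of_le hlt.le, ← mem_Icc_iff_abs_le])
    rw [intervalIntegrable_iff_integrableOn_Ioo_of_le hlt.le, IntegrableOn,
      ← lintegral_ofReal_ne_top_iff_integrable (by fun_prop) hnonneg, not_not] at hnot
    rw [hnot]
    exact ENNReal.mul_lt_top ENNReal.ofReal_lt_top (ENNReal.inv_lt_top.2 (by simpa using hxs'))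
  · have hs' : s ∉ [[x - t, x + t]] := by rwa [uIcc_of_le hlt.le, ← mem_Icc_iff_abs_le]
    have hint := (intervalIntegrable_iff_integrableOn_Ioo_of_le hlt.le).1
      (intervalIntegrable_inv_sq_sub hs')
    rw [← ofReal_integral_eq_lintegral_ofReal hint hnonneg, ← integral_Ioc_eq_integral_Ioo,
      ← intervalIntegral.integral_of_le hlt.le, integral_inv_sq_sub hs',
      ← ENNReal.ofReal_inv_of_pos hxs', ← ENNReal.ofReal_mul (by positivity),
      ENNReal.ofReal_lt_ofReal_iff_of_nonneg (by positivity)]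
    convert two_mul_div_sq_lt_inv_sub_sub_inv_add ht (not_le.1 hs) using 1 <;> ring

theorem isFiniteMeasure_of_gFn_lt_top {ρ : Measure ℝ} {x : ℝ} (hx : gFn ρ x < ⊤) :
    IsFiniteMeasure ρ := by
  have hkernel (s : ℝ) : 1 ≤ ENNReal.ofReal (1 + x ^ 2) *
      (ENNReal.ofReal (s ^ 2 + 1) / ENNReal.ofReal ((x - s) ^ 2)) := by
    rw [← mul_div_assoc,
      ENNReal.le_div_iff_mul_le (.inr (by positivity)) (.inl ENNReal.ofReal_ne_top), one_mul,
      ← ENNReal.ofReal_mul (by positivity)]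
    exact ENNReal.ofReal_le_ofReal (by nlinarith [sq_nonneg (x * s + 1)])
  refine ⟨?_⟩
  calc ρ univ = ∫⁻ _, 1 ∂ρ := lintegral_one.symm
    _ ≤ ∫⁻ s, ENNReal.ofReal (1 + x ^ 2) *
        (ENNReal.ofReal (s ^ 2 + 1) / ENNReal.ofReal ((x - s) ^ 2)) ∂ρ := lintegral_mono hkernel
    _ = ENNReal.ofReal (1 + x ^ 2) * gFn ρ x := lintegral_const_mul' _ _ ENNReal.ofReal_ne_top
    _ < ⊤ := ENNReal.mul_lt_top ENNReal.ofReal_lt_top hx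

theorem ofReal_two_mul_gFn_lt_setLIntegral {ρ : Measure ℝ} [SFinite ρ] (hρ : ρ ≠ 0) {x t : ℝ}
    (ht : 0 < t) (hx : gFn ρ x < ⊤) :
    ENNReal.ofReal (2 * t) * gFn ρ x < ∫⁻ τ in Ioo (x - t) (x + t), gFn ρ τ := by
  let F : ℝ → ℝ → ENNReal := fun τ s => ENNReal.ofReal (s ^ 2 + 1) / ENNReal.ofReal ((τ - s) ^ 2)
  have hF : Measurable (Function.uncurry F) := by fun_prop
  have hFx : Measurable (F x) := by fun_prop
  have hne : ∀ᵐ s ∂ρ, x ≠ s := by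
    filter_upwards [ae_lt_top hFx hx.ne] with s hs hxs
    simp [F, hxs, ENNReal.div_zero (by positivity : ENNReal.ofReal (s ^ 2 + 1) ≠ 0)] at hs
  have hpointwise (s : ℝ) (hxs : x ≠ s) :
      ENNReal.ofReal (2 * t) * F x s < ∫⁻ τ in Ioo (x - t) (x + t), F τ s := by
    have hc : ENNReal.ofReal (s ^ 2 + 1) ≠ 0 := by positivity
    simp only [F, div_eq_mul_inv]
    rw [lintegral_const_mul _ (by fun_prop), mul_left_comm,
      ENNReal.mul_lt_mul_iff_right hc ENNReal.ofReal_ne_top]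
    exact ofReal_two_mul_inv_sq_lt_setLIntegral_Ioo ht hxs
  calc ENNReal.ofReal (2 * t) * gFn ρ x = ∫⁻ s, ENNReal.ofReal (2 * t) * F x s ∂ρ :=
        (lintegral_const_mul _ hFx).symm
    _ < ∫⁻ s, (∫⁻ τ in Ioo (x - t) (x + t), F τ s) ∂ρ := by
        refine lintegral_strict_mono hρ hF.lintegral_prod_left.aemeasurable ?_ (hne.mono hpointwise)
        rw [lintegral_const_mul _ hFx]
        exact ENNReal.mul_ne_top ENNReal.ofReal_ne_top hx.ne
    _ = ∫⁻ τ in Ioo (x - t) (x + t), gFn ρ τ :=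
        (lintegral_lintegral_swap hF.aemeasurable).symm

theorem g_no_finite_local_max_general (ρ : Measure ℝ) (hρ : ρ ≠ 0) :
    ¬ ∃ x₀ : ℝ, gFn ρ x₀ < ⊤ ∧
      ∃ U : Set ℝ, IsOpen U ∧ x₀ ∈ U ∧ ∀ x ∈ U, gFn ρ x ≤ gFn ρ x₀ := by
  rintro ⟨x₀, hfin, U, hU, hx₀U, hmax⟩
  have : IsFiniteMeasure ρ := isFiniteMeasure_of_gFn_lt_top hfin
  obtain ⟨t, ht, hball⟩ := Metric.isOpen_iff.1 hU x₀ hx₀U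
  rw [Real.ball_eq_Ioo] at hball
  have hupper : ∫⁻ τ in Ioo (x₀ - t) (x₀ + t), gFn ρ τ ≤ ENNReal.ofReal (2 * t) * gFn ρ x₀ :=
    calc ∫⁻ τ in Ioo (x₀ - t) (x₀ + t), gFn ρ τ ≤ ∫⁻ _ in Ioo (x₀ - t) (x₀ + t), gFn ρ x₀ :=
          setLIntegral_mono' measurableSet_Ioo fun τ hτ => hmax τ (hball hτ)
      _ = ENNReal.ofReal (2 * t) * gFn ρ x₀ := by
          rw [setLIntegral_const, Real.volume_Ioo, mul_comm, show x₀ + t - (x₀ - t) = 2 * t by ring]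
  exact (hupper.trans_lt (ofReal_two_mul_gFn_lt_setLIntegral hρ ht hfin)).false

/-- `g` has no local maximum point at which it is finite. -/
theorem g_no_finite_local_max (ρ : Measure ℝ) [IsFiniteMeasure ρ] (hρ : ρ ≠ 0)
    (K : Set ℝ) (hK : IsCompact K) (hρK : ρ Kᶜ = 0) :
    ¬ ∃ x₀ : ℝ, gFn ρ x₀ < ⊤ ∧
      ∃ U : Set ℝ, IsOpen U ∧ x₀ ∈ U ∧ ∀ x ∈ U, gFn ρ x ≤ gFn ρ x₀ :=
  g_no_finite_local_max_general ρ hρ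
end

section
/- The family {V_t⁺}_{t>1} is continuous in the Hausdorff metric: for every t > 1 and every ε > 0 there exists δ > 0 such that for all r > 1 with |r − t| < δ, the set V_r⁺ is contained in the open ε-thickening {x ∈ ℝ : ∃ y ∈ V_t⁺, |x − y| < ε} of V_t⁺, and V_t⁺ is contained in the open ε-thickening of V_r⁺. -/
open MeasureTheory

/-- The set `V_t⁺ = {x ∈ ℝ : g(x) > 1/(t−1)}`. -/
def Vplus (ρ : Measure ℝ) (t : ℝ) : Set ℝ :=
  {x : ℝ | ENNReal.ofReal (1 / (t - 1)) < gFn ρ x}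

/-- The open `ε`-thickening of a set `A ⊆ ℝ`. -/
def thick (ε : ℝ) (A : Set ℝ) : Set ℝ :=
  {x : ℝ | ∃ y ∈ A, |x - y| < ε}

/-!
Since `V_r⁺` grows with `r`, two inclusions carry the content. Every point of `V_t⁺` already lies in
some `V_r⁺` with `r < t`; as `V_t⁺` is bounded, compactness of its closure yields one such `r` whose
`ε`-thickening contains `V_t⁺`. Conversely, if `x ∈ V_r⁺` is `ε`-far from `V_t⁺`, then
`g ≤ 1/(t-1)` on `ball x ε`. Integrating over the ball (Tonelli), and using that `(y - s)⁻²` is not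
integrable near `s`, shows that `ρ` does not charge the ball; strict midpoint convexity of
`y ↦ (y - s)⁻²` away from `s` then puts `g x` below `1/(t-1)` by a margin independent of `x`, which
contradicts `g x > 1/(r-1)` for `r` close to `t`.
-/

open Set Filter Topology Metric
open scoped ENNReal

noncomputable def gIntegrand (x s : ℝ) : ℝ≥0∞ :=
  ENNReal.ofReal (s ^ 2 + 1) / ENNReal.ofReal ((x - s) ^ 2)

lemma gFn_eq_lintegral_gIntegrand (ρ : Measure ℝ) (x : ℝ) :
    gFn ρ x = ∫⁻ s, gIntegrand x s ∂ρ := rfl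

lemma measurable_gIntegrand : Measurable (Function.uncurry gIntegrand) := by
  unfold Function.uncurry gIntegrand
  fun_prop

lemma gIntegrand_eq_ofReal {x s : ℝ} (h : x ≠ s) :
    gIntegrand x s = ENNReal.ofReal ((s ^ 2 + 1) / (x - s) ^ 2) := by
  rw [gIntegrand, ENNReal.ofReal_div_of_pos (by positivity [sub_ne_zero.2 h])]

lemma ofReal_inv_sq_le_gIntegrand (x s : ℝ) :
    ENNReal.ofReal ((x - s) ^ 2)⁻¹ ≤ gIntegrand x s := by
  rcases eq_or_ne x s with rfl | h
  · simp
  rw [gIntegrand_eq_ofReal h, inv_eq_one_div]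
  gcongr
  nlinarith

lemma lintegral_ball_inv_sq_sub_eq_top (s : ℝ) {b : ℝ} (hb : 0 < b) :
    ∫⁻ y in ball s b, ENNReal.ofReal ((y - s) ^ 2)⁻¹ = ⊤ := by
  have hO : (fun y => (y - s)⁻¹) =O[𝓝[≠] s] fun y => ((y - s) ^ 2)⁻¹ := by
    refine Asymptotics.IsBigO.of_bound 1 ?_
    filter_upwards [self_mem_nhdsWithin, nhdsWithin_le_nhds (ball_mem_nhds s one_pos)]
      with y hne hy
    rw [mem_ball, Real.dist_eq] at hy
    rw [one_mul, norm_inv, norm_inv, norm_pow]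
    exact inv_anti₀ (pow_pos (norm_pos_iff.2 (sub_ne_zero.2 hne)) 2)
      (pow_le_of_le_one (norm_nonneg _) hy.le two_ne_zero)
  have hni : ¬ IntegrableOn (fun y => ((y - s) ^ 2)⁻¹) (ball s b) := by
    rw [Real.ball_eq_Ioo, ← intervalIntegrable_iff_integrableOn_Ioo_of_le (by linarith)]
    exact not_intervalIntegrable_of_sub_inv_isBigO_punctured hO (by linarith)
      (Set.mem_uIcc.2 (Or.inl ⟨by linarith, by linarith⟩))
  by_contra h
  exact hni ⟨by fun_prop, (hasFiniteIntegral_iff_ofReal (ae_of_all _ fun y => by positivity)).2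
    (lt_top_iff_ne_top.2 h)⟩

lemma ae_notMem_ball_of_gFn_le {ρ : Measure ℝ} [SFinite ρ] {x η : ℝ} {C : ℝ≥0∞} (hC : C ≠ ⊤)
    (hle : ∀ y ∈ ball x η, gFn ρ y ≤ C) : ∀ᵐ s ∂ρ, s ∉ ball x η := by
  have hfin : ∫⁻ s, (∫⁻ y in ball x η, gIntegrand y s) ∂ρ ≠ ⊤ := by
    have hbound : ∫⁻ y in ball x η, gFn ρ y ≤ ∫⁻ _ in ball x η, C :=
      setLIntegral_mono measurable_const hle
    rw [setLIntegral_const] at hbound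
    rw [← lintegral_lintegral_swap measurable_gIntegrand.aemeasurable]
    exact ne_top_of_le_ne_top (ENNReal.mul_ne_top hC measure_ball_lt_top.ne) hbound
  filter_upwards [ae_lt_top (measurable_gIntegrand.lintegral_prod_left
    (μ := volume.restrict (ball x η))) hfin] with s hs hmem
  obtain ⟨b, hb, hsub⟩ := isOpen_iff.1 isOpen_ball s hmem
  refine hs.ne (eq_top_iff.2 ?_)
  calc ⊤ = ∫⁻ y in ball s b, ENNReal.ofReal ((y - s) ^ 2)⁻¹ :=
        (lintegral_ball_inv_sq_sub_eq_top s hb).symm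
    _ ≤ ∫⁻ y in ball s b, gIntegrand y s := lintegral_mono fun y => ofReal_inv_sq_le_gIntegrand y s
    _ ≤ ∫⁻ y in ball x η, gIntegrand y s := lintegral_mono_set hsub

lemma div_sq_add_le_midpoint {c u a L : ℝ} (hc : 1 ≤ c) (ha : 0 < a) (hau : 2 * a ≤ |u|)
    (huL : |u| ≤ L) :
    c / u ^ 2 + a ^ 2 / L ^ 4 ≤ (c / (u - a) ^ 2 + c / (u + a) ^ 2) / 2 := by
  have hL : 0 < L := by linarith
  have hu2 : 4 * a ^ 2 ≤ u ^ 2 := by nlinarith [sq_abs u]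
  have huL2 : u ^ 2 ≤ L ^ 2 := by nlinarith [sq_abs u, abs_nonneg u]
  have hsub : 0 < u ^ 2 - a ^ 2 := by nlinarith
  have hu : u ≠ 0 := by rintro rfl; nlinarith
  have hum : u - a ≠ 0 := fun h => by nlinarith [sub_eq_zero.1 h]
  have hup : u + a ≠ 0 := fun h => by nlinarith [eq_neg_of_add_eq_zero_left h]
  have hmid : (c / (u - a) ^ 2 + c / (u + a) ^ 2) / 2
      = c / u ^ 2 + c * a ^ 2 * (3 * u ^ 2 - a ^ 2) / (u ^ 2 * (u ^ 2 - a ^ 2) ^ 2) := by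
    field_simp
    ring
  rw [hmid, add_le_add_iff_left, div_le_div_iff₀ (by positivity) (by positivity)]
  have hden : u ^ 2 * (u ^ 2 - a ^ 2) ^ 2 ≤ u ^ 2 * L ^ 4 := by
    gcongr
    nlinarith
  have hnum : u ^ 2 ≤ c * (3 * u ^ 2 - a ^ 2) := by nlinarith
  calc a ^ 2 * (u ^ 2 * (u ^ 2 - a ^ 2) ^ 2) ≤ a ^ 2 * (u ^ 2 * L ^ 4) := by gcongr
    _ ≤ a ^ 2 * (c * (3 * u ^ 2 - a ^ 2) * L ^ 4) := by gcongr
    _ = c * a ^ 2 * (3 * u ^ 2 - a ^ 2) * L ^ 4 := by ring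

lemma gIntegrand_add_le_midpoint {x s a L : ℝ} (ha : 0 < a) (hax : 2 * a ≤ |x - s|)
    (hxL : |x - s| ≤ L) :
    gIntegrand x s + ENNReal.ofReal (a ^ 2 / L ^ 4)
      ≤ (gIntegrand (x - a) s + gIntegrand (x + a) s) / 2 := by
  have hne : ∀ y, |y| ≤ a → x + y ≠ s := fun y hy h => by
    rw [show x - s = -y by linarith, abs_neg] at hax
    linarith
  have h₀ := hne 0 (by simpa using ha.le)
  have hm := hne (-a) (by rw [abs_neg, abs_of_pos ha])
  have hp := hne a (abs_of_pos ha).le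
  simp only [add_zero, ← sub_eq_add_neg] at h₀ hm
  rw [gIntegrand_eq_ofReal h₀, gIntegrand_eq_ofReal hm, gIntegrand_eq_ofReal hp,
    ← ENNReal.ofReal_add (by positivity) (by positivity),
    ← ENNReal.ofReal_add (by positivity) (by positivity),
    ← ENNReal.ofReal_ofNat 2, ← ENNReal.ofReal_div_of_pos two_pos]
  gcongr
  rw [show x - a - s = (x - s) - a by ring, show x + a - s = (x - s) + a by ring]
  exact div_sq_add_le_midpoint (by nlinarith) ha hax hxL

lemma gFn_add_le_midpoint {ρ : Measure ℝ} {x a L : ℝ} (ha : 0 < a)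
    (hae : ∀ᵐ s ∂ρ, 2 * a ≤ |x - s| ∧ |x - s| ≤ L) :
    gFn ρ x + ENNReal.ofReal (a ^ 2 / L ^ 4) * ρ univ ≤ (gFn ρ (x - a) + gFn ρ (x + a)) / 2 := by
  simp only [gFn_eq_lintegral_gIntegrand, ENNReal.div_eq_inv_mul]
  rw [← lintegral_const, ← lintegral_add_right _ measurable_const, ← lintegral_add_left
    measurable_gIntegrand.of_uncurry_left, ← lintegral_const_mul' _ _ (by simp)]
  refine lintegral_mono_ae (hae.mono fun s hs => ?_)
  rw [← ENNReal.div_eq_inv_mul]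
  exact gIntegrand_add_le_midpoint ha hs.1 hs.2

lemma gFn_add_le_of_forall_mem_ball_le {ρ : Measure ℝ} [SFinite ρ] {x η L : ℝ} {C : ℝ≥0∞}
    (hC : C ≠ ⊤) (hη : 0 < η) (hL : ∀ᵐ s ∂ρ, |x - s| ≤ L)
    (hle : ∀ y ∈ ball x η, gFn ρ y ≤ C) :
    gFn ρ x + ENNReal.ofReal ((η / 2) ^ 2 / L ^ 4) * ρ univ ≤ C := by
  have hfar : ∀ᵐ s ∂ρ, 2 * (η / 2) ≤ |x - s| ∧ |x - s| ≤ L := by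
    filter_upwards [ae_notMem_ball_of_gFn_le hC hle, hL] with s hs hsL
    rw [mem_ball, Real.dist_eq, abs_sub_comm, not_lt] at hs
    exact ⟨by linarith, hsL⟩
  have hm : x - η / 2 ∈ ball x η := by
    rw [mem_ball, Real.dist_eq, sub_sub_cancel_left, abs_neg, abs_of_pos (half_pos hη)]
    linarith
  have hp : x + η / 2 ∈ ball x η := by
    rw [mem_ball, Real.dist_eq, add_sub_cancel_left, abs_of_pos (half_pos hη)]
    linarith
  calc _ ≤ (gFn ρ (x - η / 2) + gFn ρ (x + η / 2)) / 2 := gFn_add_le_midpoint (by positivity) hfar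
    _ ≤ (C + C) / 2 := by gcongr <;> exact hle _ ‹_›
    _ = C := by rw [ENNReal.add_div, ENNReal.add_halves]

lemma tendsto_ofReal_one_div_sub_one {t : ℝ} (ht : t ≠ 1) :
    Tendsto (fun r => ENNReal.ofReal (1 / (r - 1))) (𝓝 t) (𝓝 (ENNReal.ofReal (1 / (t - 1)))) :=
  (ENNReal.continuous_ofReal.tendsto _).comp
    ((continuousAt_const.div (continuousAt_id.sub continuousAt_const) (sub_ne_zero.2 ht)).tendsto)

lemma Vplus_mono (ρ : Measure ℝ) {r t : ℝ} (hr : 1 < r) (hrt : r ≤ t) :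
    Vplus ρ r ⊆ Vplus ρ t := fun _ hx =>
  lt_of_le_of_lt (ENNReal.ofReal_le_ofReal (one_div_le_one_div_of_le (by linarith) (by linarith)))
    hx

lemma exists_lt_mem_Vplus (ρ : Measure ℝ) {t y : ℝ} (ht : 1 < t) (hy : y ∈ Vplus ρ t) :
    ∃ r ∈ Ioo 1 t, y ∈ Vplus ρ r := by
  have hnear : ∀ᶠ r in 𝓝[<] t, y ∈ Vplus ρ r :=
    ((tendsto_ofReal_one_div_sub_one ht.ne').eventually_lt_const hy).filter_mono
      nhdsWithin_le_nhds
  have hIoo : Ioo 1 t ∈ 𝓝[<] t := Ioo_mem_nhdsLT ht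
  exact (hnear.and hIoo).exists.imp fun r h => ⟨h.2, h.1⟩

lemma gFn_le_of_add_le_abs {ρ : Measure ℝ} {R D x : ℝ} (hR : ∀ᵐ s ∂ρ, |s| ≤ R) (hD : 0 < D)
    (hx : R + D ≤ |x|) : gFn ρ x ≤ ENNReal.ofReal ((R ^ 2 + 1) / D ^ 2) * ρ univ := by
  rw [gFn_eq_lintegral_gIntegrand, ← lintegral_const]
  refine lintegral_mono_ae (hR.mono fun s hs => ?_)
  have hDx : D ≤ |x - s| := by linarith [abs_sub_abs_le_abs_sub x s]
  rw [gIntegrand_eq_ofReal (fun h => by subst h; simp at hDx; linarith)]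
  refine ENNReal.ofReal_le_ofReal (div_le_div₀ (by positivity) ?_ (by positivity) ?_)
  · nlinarith [sq_abs s, abs_nonneg s]
  · nlinarith [sq_abs (x - s)]

lemma isBounded_Vplus (ρ : Measure ℝ) [IsFiniteMeasure ρ] {R t : ℝ} (hR : ∀ᵐ s ∂ρ, |s| ≤ R)
    (ht : 1 < t) : Bornology.IsBounded (Vplus ρ t) := by
  have hsmall :
      Tendsto (fun D : ℝ => ENNReal.ofReal ((R ^ 2 + 1) / D ^ 2) * ρ univ) atTop (𝓝 0) := by
    have h := (tendsto_const_nhds (x := R ^ 2 + 1)).div_atTop (tendsto_pow_atTop two_ne_zero)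
    simpa using ENNReal.Tendsto.mul_const (ENNReal.tendsto_ofReal h)
      (Or.inr (measure_ne_top ρ univ))
  obtain ⟨D, hDsmall, hD⟩ := ((hsmall.eventually_lt_const
    (ENNReal.ofReal_pos.2 (one_div_pos.2 (sub_pos.2 ht)))).and (eventually_gt_atTop 0)).exists
  refine (isBounded_closedBall (x := 0) (r := R + D)).subset fun x hx => ?_
  rw [mem_closedBall, dist_zero_right, Real.norm_eq_abs]
  by_contra! hfar
  exact (gFn_le_of_add_le_abs hR hD (le_of_lt (by linarith))).not_gt (hDsmall.trans hx)

lemma thick_eq_thickening (ε : ℝ) (A : Set ℝ) : thick ε A = thickening ε A := by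
  ext x
  simp [thick, mem_thickening_iff, Real.dist_eq]

lemma eventually_subset_thick_Vplus (ρ : Measure ℝ) [IsFiniteMeasure ρ] {R t ε : ℝ}
    (hR : ∀ᵐ s ∂ρ, |s| ≤ R) (ht : 1 < t) (hε : 0 < ε) :
    ∀ᶠ r in 𝓝 t, Vplus ρ t ⊆ thick ε (Vplus ρ r) := by
  simp only [thick_eq_thickening]
  have : Nonempty (Ioo 1 t) := nonempty_Ioo_subtype ht
  have hmono : Monotone fun r : Ioo 1 t => thickening ε (Vplus ρ r) := fun r _ hr =>
    thickening_subset_of_subset ε (Vplus_mono ρ r.2.1 hr)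
  have hcover : closure (Vplus ρ t) ⊆ ⋃ r : Ioo 1 t, thickening ε (Vplus ρ r) := by
    intro z hz
    obtain ⟨y, hy, hzy⟩ := Metric.mem_closure_iff.1 hz ε hε
    obtain ⟨r, hr, hyr⟩ := exists_lt_mem_Vplus ρ ht hy
    exact mem_iUnion.2 ⟨⟨r, hr⟩, mem_thickening_iff.2 ⟨y, hyr, hzy⟩⟩
  obtain ⟨r₀, hr₀⟩ := (isBounded_Vplus ρ hR ht).isCompact_closure.elim_directed_cover _
    (fun _ => isOpen_thickening) hcover hmono.directed_le
  filter_upwards [Ioi_mem_nhds r₀.2.2] with r hr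
  exact subset_closure.trans (hr₀.trans (thickening_subset_of_subset ε
    (Vplus_mono ρ r₀.2.1 (le_of_lt hr))))

lemma eventually_Vplus_subset_thick (ρ : Measure ℝ) [IsFiniteMeasure ρ] (hρ : ρ ≠ 0) {R t ε : ℝ}
    (hR : ∀ᵐ s ∂ρ, |s| ≤ R) (ht : 1 < t) (hε : 0 < ε) :
    ∀ᶠ r in 𝓝 t, Vplus ρ r ⊆ thick ε (Vplus ρ t) := by
  obtain ⟨B, hB, hVB⟩ :=
    (isBounded_Vplus ρ hR (lt_add_of_lt_of_pos ht one_pos)).subset_closedBall_lt 0 0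
  set κ := ENNReal.ofReal ((ε / 2) ^ 2 / (B + |R|) ^ 4) * ρ univ
  have hκ : 0 < κ := ENNReal.mul_pos (by simp; positivity) (Measure.measure_univ_ne_zero.2 hρ)
  have hmargin : ∀ᶠ r in 𝓝 t, ENNReal.ofReal (1 / (t - 1)) < ENNReal.ofReal (1 / (r - 1)) + κ :=
    ((tendsto_ofReal_one_div_sub_one ht.ne').add_const κ).eventually_const_lt
      (ENNReal.lt_add_right ENNReal.ofReal_ne_top hκ.ne')
  filter_upwards [hmargin, Ioo_mem_nhds ht (lt_add_one t)] with r hr hr1 x hx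
  by_contra hxt
  have hle : ∀ y ∈ ball x ε, gFn ρ y ≤ ENNReal.ofReal (1 / (t - 1)) := fun y hy =>
    not_lt.1 fun hyt => hxt ⟨y, hyt, by rwa [mem_ball, Real.dist_eq, abs_sub_comm] at hy⟩
  have hxB : |x| ≤ B := by
    simpa using hVB (Vplus_mono ρ hr1.1 hr1.2.le hx)
  have hdist : ∀ᵐ s ∂ρ, |x - s| ≤ B + |R| := hR.mono fun s hs => by
    linarith [abs_sub x s, le_abs_self R]
  have hgap := gFn_add_le_of_forall_mem_ball_le ENNReal.ofReal_ne_top hε hdist hle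
  exact hx.not_gt (lt_of_add_lt_add_right (hgap.trans_lt hr))

/-- the family `{V_t⁺}_{t>1}` is continuous in the Hausdorff metric. -/
theorem Vplus_hausdorff_continuous (ρ : Measure ℝ) [IsFiniteMeasure ρ] (hρ : ρ ≠ 0)
    (K : Set ℝ) (hK : IsCompact K) (hρK : ρ Kᶜ = 0) :
    ∀ t : ℝ, 1 < t → ∀ ε : ℝ, 0 < ε → ∃ δ : ℝ, 0 < δ ∧
      ∀ r : ℝ, 1 < r → |r - t| < δ →
        Vplus ρ r ⊆ thick ε (Vplus ρ t) ∧ Vplus ρ t ⊆ thick ε (Vplus ρ r) := by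
  intro t ht ε hε
  obtain ⟨R, hKR⟩ := hK.isBounded.subset_closedBall 0
  have hR : ∀ᵐ s ∂ρ, |s| ≤ R :=
    Filter.Eventually.mono (mem_ae_iff.2 hρK) fun s hs => by simpa using hKR hs
  obtain ⟨δ, hδ, hnear⟩ := Metric.eventually_nhds_iff.1
    ((eventually_Vplus_subset_thick ρ hρ hR ht hε).and (eventually_subset_thick_Vplus ρ hR ht hε))
  exact ⟨δ, hδ, fun r _ hr => hnear (by rwa [Real.dist_eq])⟩
end

section
/- If t > 1 and x ∈ V_t⁺ (equivalently f_t(x) > 0), then the infimum defining f_t(x) is attained with equality: ∫_ℝ (s²+1)/((x−s)² + f_t(x)²) dρ(s) = 1/(t−1). -/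
open MeasureTheory

/-- `f_t(x) = inf { y > 0 : ∫ (s²+1)/((x−s)²+y²) dρ(s) ≤ 1/(t−1) }`. -/
noncomputable def fFn (ρ : Measure ℝ) (t : ℝ) (x : ℝ) : ℝ :=
  sInf {y : ℝ | 0 < y ∧ (∫ s, (s ^ 2 + 1) / ((x - s) ^ 2 + y ^ 2) ∂ρ) ≤ 1 / (t - 1)}

/-!
Write `F(y) = ∫ (s²+1)/((x−s)²+y²) dρ(s)`, so that `f_t(x)` is the infimum of the sublevel set
`{y > 0 : F(y) ≤ 1/(t−1)}`. Since `s² + 1 ≤ 2((x−s)² + y²) + 2x² + 1`, the integrand is bounded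
uniformly in `s` and in `y` away from `0`, so by dominated convergence `F` is continuous on
`(0, ∞)` and tends to `0` at `∞`; it is clearly nonincreasing. By Fatou's lemma `g(x)` is at most
`liminf_{y → 0⁺} F(y)`, so `g(x) > 1/(t−1)` gives some `y₁ > 0` with `F(y₁) > 1/(t−1)`.
The sublevel set is then a nonempty closed half-line contained in `[y₁, ∞)`, and by continuity
`F` takes the value `1/(t−1)` at its left end point.
-/

open Filter Topology Set

theorem AntitoneOn.apply_sInf_sublevel_eq {F : ℝ → ℝ} {a c y₀ y₁ : ℝ}
    (hF : AntitoneOn F (Ioi a)) (hcont : ContinuousOn F (Ioi a))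
    (hy₀ : a < y₀) (hFy₀ : F y₀ ≤ c) (hy₁ : a < y₁) (hFy₁ : c < F y₁) :
    F (sInf {y | a < y ∧ F y ≤ c}) = c := by
  set S := {y | a < y ∧ F y ≤ c}
  have hS_ge : ∀ y ∈ S, y₁ ≤ y := fun y hy =>
    le_of_not_gt fun hlt => (hFy₁.trans_le (hF hy.1 hy₁ hlt.le)).not_ge hy.2
  have hS_closed : IsClosed S := by
    have hS_eq : S = Ici y₁ ∩ F ⁻¹' Iic c :=
      ext fun y => ⟨fun hy => ⟨hS_ge y hy, hy.2⟩, fun hy => ⟨hy₁.trans_le hy.1, hy.2⟩⟩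
    rw [hS_eq]
    exact (hcont.mono (Ici_subset_Ioi.mpr hy₁)).preimage_isClosed_of_isClosed isClosed_Ici
      isClosed_Iic
  have hS_bdd : BddBelow S := ⟨y₁, hS_ge⟩
  have hm : sInf S ∈ S := hS_closed.csInf_mem ⟨y₀, hy₀, hFy₀⟩ hS_bdd
  have hF_left : Tendsto F (𝓝[<] sInf S) (𝓝 (F (sInf S))) :=
    (hcont.continuousAt (Ioi_mem_nhds hm.1)).tendsto.mono_left nhdsWithin_le_nhds
  refine le_antisymm hm.2 (ge_of_tendsto hF_left ?_)
  filter_upwards [Ioo_mem_nhdsLT hm.1] with y hy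
  exact le_of_not_ge fun hFy => notMem_of_lt_csInf hy.2 hS_bdd ⟨hy.1, hFy⟩

theorem ENNReal.tendsto_ofReal_div {α : Type*} {l : Filter α} {g : α → ℝ} {a b : ℝ}
    (hg : Tendsto g l (𝓝 b)) (hg_pos : ∀ᶠ i in l, 0 < g i) :
    Tendsto (fun i => ENNReal.ofReal (a / g i)) l (𝓝 (ENNReal.ofReal a / ENNReal.ofReal b)) := by
  refine (ENNReal.Tendsto.const_div (ENNReal.tendsto_ofReal hg)
    (Or.inr ENNReal.ofReal_ne_top)).congr' ?_
  filter_upwards [hg_pos] with i hi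
  exact (ENNReal.ofReal_div_of_pos hi).symm

theorem sq_add_one_div_le {x y s ε : ℝ} (hε : 0 < ε) (hy : ε ≤ y ^ 2) :
    (s ^ 2 + 1) / ((x - s) ^ 2 + y ^ 2) ≤ 2 + (2 * x ^ 2 + 1) / ε := by
  have hquot : 2 * x ^ 2 + 1 ≤ (2 * x ^ 2 + 1) / ε * ((x - s) ^ 2 + y ^ 2) := by
    rw [div_mul_eq_mul_div, le_div_iff₀ hε]
    nlinarith [sq_nonneg (x - s)]
  rw [div_le_iff₀ (by nlinarith [sq_nonneg (x - s)])]
  nlinarith [sq_nonneg (2 * x - s), sq_nonneg y]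

theorem measurable_sq_add_one_div (x y : ℝ) :
    Measurable fun s : ℝ => (s ^ 2 + 1) / ((x - s) ^ 2 + y ^ 2) := by
  fun_prop

noncomputable def kernelIntegral (ρ : Measure ℝ) (x y : ℝ) : ℝ :=
  ∫ s, (s ^ 2 + 1) / ((x - s) ^ 2 + y ^ 2) ∂ρ

section kernelIntegral

variable (ρ : Measure ℝ) [IsFiniteMeasure ρ] (x : ℝ)

theorem integrable_sq_add_one_div {y : ℝ} (hy : y ≠ 0) :
    Integrable (fun s => (s ^ 2 + 1) / ((x - s) ^ 2 + y ^ 2)) ρ := by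
  refine (integrable_const (2 + (2 * x ^ 2 + 1) / y ^ 2)).mono'
    (measurable_sq_add_one_div x y).aestronglyMeasurable
    (Eventually.of_forall fun s => ?_)
  rw [Real.norm_of_nonneg (by positivity)]
  exact sq_add_one_div_le (pow_two_pos_of_ne_zero hy) le_rfl

theorem antitoneOn_kernelIntegral : AntitoneOn (kernelIntegral ρ x) (Ioi 0) := by
  intro y₁ (hy₁ : 0 < y₁) y₂ (hy₂ : 0 < y₂) hy
  refine integral_mono (integrable_sq_add_one_div ρ x hy₂.ne')
    (integrable_sq_add_one_div ρ x hy₁.ne') fun s => ?_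
  have hy_sq : y₁ ^ 2 ≤ y₂ ^ 2 := pow_le_pow_left₀ hy₁.le hy 2
  exact div_le_div_of_nonneg_left (by positivity) (by positivity) (by linarith)

theorem continuousAt_kernelIntegral {y₀ : ℝ} (hy₀ : y₀ ≠ 0) :
    ContinuousAt (kernelIntegral ρ x) y₀ := by
  have hy₀_sq : 0 < y₀ ^ 2 := pow_two_pos_of_ne_zero hy₀
  have hy_near : ∀ᶠ y in 𝓝 y₀, y₀ ^ 2 / 2 < y ^ 2 :=
    ((continuous_pow 2).tendsto y₀).eventually_const_lt (half_lt_self hy₀_sq)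
  refine continuousAt_of_dominated (bound := fun _ => 2 + (2 * x ^ 2 + 1) / (y₀ ^ 2 / 2))
    (Eventually.of_forall fun y => (measurable_sq_add_one_div x y).aestronglyMeasurable) ?_
    (integrable_const _) (Eventually.of_forall fun s => ?_)
  · filter_upwards [hy_near] with y hy
    refine Eventually.of_forall fun s => ?_
    rw [Real.norm_of_nonneg (by positivity)]
    exact sq_add_one_div_le (half_pos hy₀_sq) hy.le
  · exact continuousAt_const.div (by fun_prop)
      (add_pos_of_nonneg_of_pos (sq_nonneg _) hy₀_sq).ne'

theorem tendsto_kernelIntegral_atTop : Tendsto (kernelIntegral ρ x) atTop (𝓝 0) := by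
  have hlim := tendsto_integral_filter_of_dominated_convergence (μ := ρ) (l := atTop)
    (F := fun y s => (s ^ 2 + 1) / ((x - s) ^ 2 + y ^ 2)) (f := fun _ => 0)
    (fun _ => 2 + (2 * x ^ 2 + 1) / 1)
    (Eventually.of_forall fun y => (measurable_sq_add_one_div x y).aestronglyMeasurable) ?_
    (integrable_const _) (Eventually.of_forall fun s => ?_)
  · rwa [integral_zero] at hlim
  · filter_upwards [eventually_ge_atTop 1] with y hy
    refine Eventually.of_forall fun s => ?_
    rw [Real.norm_of_nonneg (by positivity)]
    exact sq_add_one_div_le one_pos (by nlinarith)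
  · exact tendsto_const_nhds.div_atTop
      (tendsto_atTop_add_const_left _ _ (tendsto_pow_atTop two_ne_zero))

theorem exists_kernelIntegral_le {c : ℝ} (hc : 0 < c) :
    ∃ y, 0 < y ∧ kernelIntegral ρ x y ≤ c :=
  (((tendsto_kernelIntegral_atTop ρ x).eventually (ge_mem_nhds hc)).and
    (eventually_gt_atTop 0)).exists.imp fun _ hy => ⟨hy.2, hy.1⟩

theorem exists_lt_kernelIntegral_of_ofReal_lt_gFn {c : ℝ} (hx : ENNReal.ofReal c < gFn ρ x) :
    ∃ y, 0 < y ∧ c < kernelIntegral ρ x y := by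
  by_contra! hle
  refine hx.not_ge ?_
  have hlim : ∀ s, Tendsto (fun y => ENNReal.ofReal ((s ^ 2 + 1) / ((x - s) ^ 2 + y ^ 2)))
      (𝓝[>] 0) (𝓝 (ENNReal.ofReal (s ^ 2 + 1) / ENNReal.ofReal ((x - s) ^ 2))) := fun s => by
    refine ENNReal.tendsto_ofReal_div ?_ ?_
    · have hy : Tendsto (fun y : ℝ => y) (𝓝[>] 0) (𝓝 0) := nhdsWithin_le_nhds
      simpa using tendsto_const_nhds.add (hy.pow 2)
    · filter_upwards [self_mem_nhdsWithin] with y (hy : 0 < y)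
      positivity
  calc gFn ρ x
      = ∫⁻ s, liminf (fun y => ENNReal.ofReal ((s ^ 2 + 1) / ((x - s) ^ 2 + y ^ 2)))
          (𝓝[>] 0) ∂ρ := lintegral_congr fun s => (hlim s).liminf_eq.symm
    _ ≤ liminf (fun y => ∫⁻ s, ENNReal.ofReal ((s ^ 2 + 1) / ((x - s) ^ 2 + y ^ 2)) ∂ρ)
          (𝓝[>] 0) := lintegral_liminf_le fun y => (measurable_sq_add_one_div x y).ennreal_ofReal
    _ ≤ ENNReal.ofReal c := by
      refine liminf_le_of_frequently_le' (Eventually.frequently ?_)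
      filter_upwards [self_mem_nhdsWithin] with y (hy : 0 < y)
      rw [← ofReal_integral_eq_lintegral_ofReal (integrable_sq_add_one_div ρ x hy.ne')
        (Eventually.of_forall fun s => by positivity)]
      exact ENNReal.ofReal_le_ofReal (hle y hy)

end kernelIntegral

theorem f_eq_at_Vplus_general (ρ : Measure ℝ) [IsFiniteMeasure ρ]
    (t : ℝ) (ht : 1 < t) (x : ℝ) (hx : x ∈ Vplus ρ t) :
    (∫ s, (s ^ 2 + 1) / ((x - s) ^ 2 + (fFn ρ t x) ^ 2) ∂ρ) = 1 / (t - 1) := by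
  obtain ⟨y₀, hy₀, hFy₀⟩ := exists_kernelIntegral_le ρ x (one_div_pos.mpr (sub_pos.mpr ht))
  obtain ⟨y₁, hy₁, hFy₁⟩ := exists_lt_kernelIntegral_of_ofReal_lt_gFn ρ x hx
  -- `fFn ρ t x` unfolds to `sInf {y | 0 < y ∧ kernelIntegral ρ x y ≤ 1 / (t - 1)}`.
  exact (antitoneOn_kernelIntegral ρ x).apply_sInf_sublevel_eq
    (fun y hy => (continuousAt_kernelIntegral ρ x hy.ne').continuousWithinAt)
    hy₀ hFy₀ hy₁ hFy₁

/-- for `x ∈ V_t⁺`, the infimum defining `f_t(x)` is attained with equality. -/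
theorem f_eq_at_Vplus (ρ : Measure ℝ) [IsFiniteMeasure ρ] (hρ : ρ ≠ 0)
    (K : Set ℝ) (hK : IsCompact K) (hρK : ρ Kᶜ = 0)
    (t : ℝ) (ht : 1 < t) (x : ℝ) (hx : x ∈ Vplus ρ t) :
    (∫ s, (s ^ 2 + 1) / ((x - s) ^ 2 + (fFn ρ t x) ^ 2) ∂ρ) = 1 / (t - 1) :=
  f_eq_at_Vplus_general ρ t ht x hx
end

section
/- For each fixed t > 1, the function f_t : ℝ → [0,∞) is continuous. -/
open MeasureTheory

/-! For fixed `y > 0`, `F(x, y) = ∫ (s²+1)/((x−s)²+y²) dρ(s)` is continuous in `x` by dominated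
convergence (the integrand is bounded by `(s²+1)/y²`, integrable since `ρ` has compact support),
while in `y` it is strictly decreasing on `(0, ∞)` and tends to `0`. Hence `f_t(x)` is where
`F(x, ·)` crosses the level `c = 1/(t−1)`, and both semicontinuities follow: if `f_t(x₀) < m` then
`F(x₀, m) < c`, which persists near `x₀` and forces `f_t(x) ≤ m`; if `0 < m < f_t(x₀)` then
`F(x₀, m) > c`, which persists near `x₀` and forces `f_t(x) ≥ m`. -/

open Filter Set Topology

theorem ContinuousOn.integrable_of_measure_compl_eq_zero {X E : Type*} [MeasurableSpace X]
    [TopologicalSpace X] [OpensMeasurableSpace X] [T2Space X] [NormedAddCommGroup E]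
    {μ : Measure X} [IsFiniteMeasureOnCompacts μ] {f : X → E} {K : Set X}
    (hf : ContinuousOn f K) (hK : IsCompact K) (hμK : μ Kᶜ = 0) : Integrable f μ :=
  (hf.integrableOn_compact hK).integrable_of_ae_notMem_eq_zero <|
    (ae_iff.2 hμK).mono fun _ hx hx' => absurd hx hx'

theorem integral_lt_integral_of_forall_lt {α : Type*} [MeasurableSpace α] {μ : Measure α}
    {f g : α → ℝ} (hμ : μ ≠ 0) (hf : Integrable f μ) (hg : Integrable g μ)
    (hfg : ∀ a, f a < g a) : ∫ a, f a ∂μ < ∫ a, g a ∂μ := by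
  have hsupp : Function.support (fun a => g a - f a) = univ :=
    eq_univ_of_forall fun a => (sub_pos.2 (hfg a)).ne'
  have hpos : 0 < ∫ a, (g a - f a) ∂μ := by
    rw [integral_pos_iff_support_of_nonneg (fun a => (sub_pos.2 (hfg a)).le) (hg.sub hf), hsupp]
    exact Measure.measure_univ_pos.2 hμ
  rw [integral_sub hg hf] at hpos
  linarith

/-- `posSublevelInf g c = inf {y > 0 | g y ≤ c}`, which is `0` if that set is empty. -/
noncomputable def posSublevelInf (g : ℝ → ℝ) (c : ℝ) : ℝ :=
  sInf {y | 0 < y ∧ g y ≤ c}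

section posSublevelInf

variable {g : ℝ → ℝ} {c y : ℝ}

theorem posSublevelInf_nonneg (g : ℝ → ℝ) (c : ℝ) : 0 ≤ posSublevelInf g c :=
  Real.sInf_nonneg fun _ hy => hy.1.le

theorem posSublevelInf_le (hy : 0 < y) (hgy : g y ≤ c) : posSublevelInf g c ≤ y :=
  csInf_le ⟨0, fun _ hz => hz.1.le⟩ ⟨hy, hgy⟩

theorem le_posSublevelInf (hg : AntitoneOn g (Ioi 0)) (hne : ∃ z, 0 < z ∧ g z ≤ c)
    (hy : 0 < y) (hcy : c < g y) : y ≤ posSublevelInf g c := by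
  refine le_csInf hne fun z hz => le_of_not_gt fun hzy => ?_
  exact (hcy.trans_le (hg hz.1 hy hzy.le)).not_ge hz.2

theorem lt_of_posSublevelInf_lt (hg : StrictAntiOn g (Ioi 0)) (hne : ∃ z, 0 < z ∧ g z ≤ c)
    (hy : posSublevelInf g c < y) : g y < c := by
  obtain ⟨z, hz, hzy⟩ := exists_lt_of_csInf_lt hne hy
  exact (hg hz.1 (hz.1.trans hzy) hzy).trans_le hz.2

theorem continuous_posSublevelInf {X : Type*} [TopologicalSpace X] {G : X → ℝ → ℝ}
    (hcont : ∀ y, 0 < y → Continuous fun x => G x y) (hanti : ∀ x, StrictAntiOn (G x) (Ioi 0))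
    (hne : ∀ x, ∃ y, 0 < y ∧ G x y ≤ c) : Continuous fun x => posSublevelInf (G x) c := by
  refine continuous_iff_lower_upperSemicontinuous.2 ⟨fun x₀ y hy => ?_, fun x₀ y hy => ?_⟩
  · rcases lt_or_ge y 0 with hy0 | hy0
    · exact Eventually.of_forall fun x => hy0.trans_le (posSublevelInf_nonneg _ _)
    obtain ⟨m, hym, hm⟩ := exists_between hy
    have hm0 : 0 < m := hy0.trans_lt hym
    have hcm : c < G x₀ m := lt_of_not_ge fun h => (posSublevelInf_le hm0 h).not_gt hm
    filter_upwards [(hcont m hm0).continuousAt.eventually_const_lt hcm] with x hx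
    exact hym.trans_le (le_posSublevelInf (hanti x).antitoneOn (hne x) hm0 hx)
  · obtain ⟨m, hm, hmy⟩ := exists_between hy
    have hm0 : 0 < m := (posSublevelInf_nonneg _ _).trans_lt hm
    have hcm : G x₀ m < c := lt_of_posSublevelInf_lt (hanti x₀) (hne x₀) hm
    filter_upwards [(hcont m hm0).continuousAt.eventually_lt_const hcm] with x hx
    exact (posSublevelInf_le hm0 hx.le).trans_lt hmy

end posSublevelInf

section PoissonKernel

variable {ρ : Measure ℝ} {w : ℝ → ℝ} {y : ℝ}

theorem norm_div_sq_add_sq_le (a x s : ℝ) (hy : y ≠ 0) :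
    ‖a / ((x - s) ^ 2 + y ^ 2)‖ ≤ ‖a‖ / y ^ 2 := by
  have hd : 0 ≤ (x - s) ^ 2 + y ^ 2 := by positivity
  rw [norm_div, Real.norm_of_nonneg hd]
  exact div_le_div_of_nonneg_left (norm_nonneg a) (by positivity)
    (le_add_of_nonneg_left (sq_nonneg _))

theorem aestronglyMeasurable_div_sq_add_sq (hw : Integrable w ρ) (x y : ℝ) :
    AEStronglyMeasurable (fun s => w s / ((x - s) ^ 2 + y ^ 2)) ρ :=
  hw.aestronglyMeasurable.div₀
    (by fun_prop : Continuous fun s : ℝ => (x - s) ^ 2 + y ^ 2).aestronglyMeasurable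

theorem integrable_div_sq_add_sq (hw : Integrable w ρ) (x : ℝ) (hy : y ≠ 0) :
    Integrable (fun s => w s / ((x - s) ^ 2 + y ^ 2)) ρ :=
  (hw.norm.div_const _).mono' (aestronglyMeasurable_div_sq_add_sq hw x y)
    (Eventually.of_forall fun s => norm_div_sq_add_sq_le _ x s hy)

theorem continuous_integral_div_sq_add_sq (hw : Integrable w ρ) (hy : y ≠ 0) :
    Continuous fun x => ∫ s, w s / ((x - s) ^ 2 + y ^ 2) ∂ρ := by
  refine continuous_of_dominated (fun x => aestronglyMeasurable_div_sq_add_sq hw x y)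
    (fun x => Eventually.of_forall fun s => norm_div_sq_add_sq_le _ x s hy)
    (hw.norm.div_const _) (Eventually.of_forall fun s => ?_)
  exact continuous_const.div (by fun_prop) fun x => by positivity

theorem strictAntiOn_integral_div_sq_add_sq (hρ : ρ ≠ 0) (hw : Integrable w ρ)
    (hw₀ : ∀ s, 0 < w s) (x : ℝ) :
    StrictAntiOn (fun y => ∫ s, w s / ((x - s) ^ 2 + y ^ 2) ∂ρ) (Ioi 0) := by
  rintro y₁ (hy₁ : 0 < y₁) y₂ (hy₂ : 0 < y₂) hy₁₂
  refine integral_lt_integral_of_forall_lt hρ (integrable_div_sq_add_sq hw x hy₂.ne')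
    (integrable_div_sq_add_sq hw x hy₁.ne') fun s => ?_
  exact div_lt_div_of_pos_left (hw₀ s) (by positivity) (by gcongr)

theorem tendsto_integral_div_sq_add_sq_atTop (hw : Integrable w ρ) (x : ℝ) :
    Tendsto (fun y => ∫ s, w s / ((x - s) ^ 2 + y ^ 2) ∂ρ) atTop (𝓝 0) := by
  refine squeeze_zero_norm' ?_
    ((tendsto_const_nhds (x := ∫ s, ‖w s‖ ∂ρ)).div_atTop (tendsto_pow_atTop two_ne_zero))
  filter_upwards [eventually_ne_atTop 0] with y hy
  rw [← integral_div]
  exact norm_integral_le_of_norm_le (hw.norm.div_const _)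
    (Eventually.of_forall fun s => norm_div_sq_add_sq_le _ x s hy)

end PoissonKernel

/-- for each fixed `t > 1`, the function `f_t` is continuous. -/
theorem f_continuous (ρ : Measure ℝ) [IsFiniteMeasure ρ] (hρ : ρ ≠ 0)
    (K : Set ℝ) (hK : IsCompact K) (hρK : ρ Kᶜ = 0)
    (t : ℝ) (ht : 1 < t) :
    Continuous (fFn ρ t) := by
  have hw : Integrable (fun s : ℝ => s ^ 2 + 1) ρ :=
    ContinuousOn.integrable_of_measure_compl_eq_zero (by fun_prop) hK hρK
  have hc : (0 : ℝ) < 1 / (t - 1) := one_div_pos.2 (sub_pos.2 ht)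
  refine continuous_posSublevelInf
    (fun y hy => continuous_integral_div_sq_add_sq hw hy.ne')
    (strictAntiOn_integral_div_sq_add_sq hρ hw fun s => by positivity) fun x => ?_
  obtain ⟨y, hyc, hy⟩ :=
    (((tendsto_integral_div_sq_add_sq_atTop hw x).eventually (ge_mem_nhds hc)).and
      (eventually_gt_atTop 0)).exists
  exact ⟨y, hy, hyc⟩
end

section
/- For every t > 1, c > 0 and ε > 0 there exists δ > 0 such that for every r with t < r < t + δ and every x ∈ ℝ with f_t(x) ≥ c, one has f_t(x) < f_r(x) ≤ (1+ε) f_t(x). -/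
open MeasureTheory

/-!
For fixed `x`, the integral `F(x, y)` is continuous and decreasing in `y > 0`, so a
positive `f_t(x)` solves `F(x, f_t(x)) = 1/(t-1)`; since `1/(r-1) < 1/(t-1)` this forces
`f_t(x) < f_r(x)`. For the upper bound, `F(x, y) ≤ C / (dist(x, [-M, M])² + y²)`, so
`f_t(x) ≥ c` confines `x` to a bounded set and `|x - s| ≤ D` on the support of `ρ`. There the
integrands at heights `(1+ε)f` and `f` have ratio at most `κ = (D² + c²)/(D² + (1+ε)²c²) < 1`,
uniformly in `x`, whence `F(x, (1+ε) f_t(x)) ≤ κ/(t-1) ≤ 1/(r-1)` once `r - 1 < (t-1)/κ`.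
-/

open Filter Set

def posSublevel (g : ℝ → ℝ) (a : ℝ) : Set ℝ :=
  {y | 0 < y ∧ g y ≤ a}

noncomputable def levelInf (g : ℝ → ℝ) (a : ℝ) : ℝ :=
  sInf (posSublevel g a)

section levelInf

variable {g : ℝ → ℝ} {a b y : ℝ}

lemma bddBelow_posSublevel : BddBelow (posSublevel g a) :=
  ⟨0, fun _ hy => hy.1.le⟩

lemma levelInf_le (hy : 0 < y) (hgy : g y ≤ a) : levelInf g a ≤ y :=
  csInf_le bddBelow_posSublevel ⟨hy, hgy⟩

lemma levelInf_le_levelInf (hne : (posSublevel g a).Nonempty) (hab : a ≤ b) :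
    levelInf g b ≤ levelInf g a :=
  csInf_le_csInf bddBelow_posSublevel hne fun _ hy => ⟨hy.1, hy.2.trans hab⟩

lemma apply_levelInf (hg : AntitoneOn g (Ioi 0)) (hc : ContinuousOn g (Ioi 0))
    (hne : (posSublevel g a).Nonempty) (hpos : 0 < levelInf g a) :
    g (levelInf g a) = a := by
  set f := levelInf g a
  have hcf : ContinuousAt g f := hc.continuousAt (Ioi_mem_nhds hpos)
  have above : ∀ y, f < y → g y ≤ a := fun y hy => by
    obtain ⟨z, hz, hzy⟩ := (csInf_lt_iff bddBelow_posSublevel hne).mp hy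
    exact (hg hz.1 (hz.1.trans hzy) hzy.le).trans hz.2
  have below : ∀ y, 0 < y → y < f → a < g y := fun y hy hyf =>
    not_le.mp fun hgy => (levelInf_le hy hgy).not_gt hyf
  refine le_antisymm ?_ ?_
  · refine le_of_tendsto (hcf.tendsto.mono_left (nhdsWithin_le_nhds (s := Ioi f))) ?_
    filter_upwards [self_mem_nhdsWithin] with y hy using above y hy
  · refine ge_of_tendsto (hcf.tendsto.mono_left (nhdsWithin_le_nhds (s := Iio f))) ?_
    filter_upwards [Ioo_mem_nhdsLT hpos] with y hy using (below y hy.1 hy.2).le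

lemma levelInf_lt_levelInf (hg : AntitoneOn g (Ioi 0)) (hc : ContinuousOn g (Ioi 0))
    (hne : (posSublevel g a).Nonempty) (hab : a < b) (hpos : 0 < levelInf g b) :
    levelInf g b < levelInf g a := by
  have hle := levelInf_le_levelInf hne hab.le
  have hneb : (posSublevel g b).Nonempty := hne.mono fun _ hy => ⟨hy.1, hy.2.trans hab.le⟩
  refine hle.lt_of_ne fun heq => hab.ne ?_
  rw [← apply_levelInf hg hc hne (hpos.trans_le hle), ← heq, apply_levelInf hg hc hneb hpos]

end levelInf

noncomputable def poissonWeight (x y s : ℝ) : ℝ :=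
  (s ^ 2 + 1) / ((x - s) ^ 2 + y ^ 2)

noncomputable def poissonIntegral (ρ : Measure ℝ) (x y : ℝ) : ℝ :=
  ∫ s, poissonWeight x y s ∂ρ

section poissonWeight

variable {x y s M : ℝ}

lemma poissonWeight_nonneg : 0 ≤ poissonWeight x y s := by
  unfold poissonWeight; positivity

lemma continuous_poissonWeight (hy : 0 < y) : Continuous (poissonWeight x y) :=
  Continuous.div (by fun_prop) (by fun_prop) fun _ =>
    (add_pos_of_nonneg_of_pos (sq_nonneg _) (pow_pos hy 2)).ne'

lemma poissonWeight_antitoneOn (x s : ℝ) : AntitoneOn (fun y => poissonWeight x y s) (Ioi 0) :=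
  fun y₁ (hy₁ : 0 < y₁) _ _ h => div_le_div_of_nonneg_left (by positivity) (by positivity)
    (by gcongr)

lemma poissonWeight_le (hs : |s| ≤ M) (hy : 0 < y) :
    poissonWeight x y s ≤ (M ^ 2 + 1) / (max (|x| - M) 0 ^ 2 + y ^ 2) := by
  have hnum : s ^ 2 ≤ M ^ 2 := sq_le_sq.mpr (hs.trans (le_abs_self M))
  have hdist : max (|x| - M) 0 ≤ |x - s| :=
    max_le (by linarith [abs_sub_abs_le_abs_sub x s]) (abs_nonneg _)
  have hden : max (|x| - M) 0 ^ 2 ≤ (x - s) ^ 2 := by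
    rw [← sq_abs (x - s)]; gcongr
  unfold poissonWeight
  gcongr

lemma poissonWeight_mul_le {l f c D : ℝ} (hxs : |x - s| ≤ D) (hc : 0 < c) (hcf : c ≤ f)
    (hl : 1 ≤ l) :
    poissonWeight x (l * f) s ≤
      (D ^ 2 + c ^ 2) / (D ^ 2 + l ^ 2 * c ^ 2) * poissonWeight x f s := by
  have hA : (x - s) ^ 2 ≤ D ^ 2 := by rw [← sq_abs]; gcongr
  have hcf2 : c ^ 2 ≤ f ^ 2 := by gcongr
  have hl2 : 1 ≤ l ^ 2 := one_le_pow₀ hl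
  have hf : 0 < f := hc.trans_le hcf
  unfold poissonWeight
  rw [div_mul_div_comm, div_le_div_iff₀ (by positivity) (by positivity),
    mul_comm (D ^ 2 + c ^ 2)]
  -- (A + f²)(D² + l²c²) ≤ (D² + c²)(A + l²f²) reduces to (l² - 1)(D² f² - A c²) ≥ 0.
  have key : 0 ≤ (l ^ 2 - 1) * (D ^ 2 * f ^ 2 - (x - s) ^ 2 * c ^ 2) :=
    mul_nonneg (by linarith) (by nlinarith [sq_nonneg (x - s)])
  have hw : 0 ≤ s ^ 2 + 1 := by positivity
  nlinarith [mul_nonneg hw key]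

end poissonWeight

section poissonIntegral

variable {ρ : Measure ℝ} [IsFiniteMeasure ρ] {M x y a : ℝ}

lemma integrable_poissonWeight (hM : ∀ᵐ s ∂ρ, |s| ≤ M) (hy : 0 < y) :
    Integrable (poissonWeight x y) ρ := by
  refine (integrable_const ((M ^ 2 + 1) / (max (|x| - M) 0 ^ 2 + y ^ 2))).mono'
    (continuous_poissonWeight hy).aestronglyMeasurable ?_
  filter_upwards [hM] with s hs
  rw [Real.norm_of_nonneg poissonWeight_nonneg]
  exact poissonWeight_le hs hy

lemma poissonIntegral_le (hM : ∀ᵐ s ∂ρ, |s| ≤ M) (hy : 0 < y) :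
    poissonIntegral ρ x y ≤ (M ^ 2 + 1) * ρ.real univ / (max (|x| - M) 0 ^ 2 + y ^ 2) := by
  calc poissonIntegral ρ x y
      ≤ ∫ _, (M ^ 2 + 1) / (max (|x| - M) 0 ^ 2 + y ^ 2) ∂ρ := by
        refine integral_mono_ae (integrable_poissonWeight hM hy) (integrable_const _) ?_
        filter_upwards [hM] with s hs using poissonWeight_le hs hy
    _ = _ := by rw [integral_const, smul_eq_mul]; ring

lemma poissonIntegral_antitoneOn (hM : ∀ᵐ s ∂ρ, |s| ≤ M) :
    AntitoneOn (poissonIntegral ρ x) (Ioi 0) := fun _ hy₁ _ hy₂ h =>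
  integral_mono (integrable_poissonWeight hM hy₂) (integrable_poissonWeight hM hy₁)
    fun s => poissonWeight_antitoneOn x s hy₁ hy₂ h

lemma continuousOn_poissonIntegral (hM : ∀ᵐ s ∂ρ, |s| ≤ M) :
    ContinuousOn (poissonIntegral ρ x) (Ioi 0) := by
  intro y₀ (hy₀ : 0 < y₀)
  have hy₀' : 0 < y₀ / 2 := half_pos hy₀
  have hnear : ∀ᶠ y in nhds y₀, y₀ / 2 < y := Ioi_mem_nhds (half_lt_self hy₀)
  -- the weight at height `y₀ / 2` dominates the weights at all heights near `y₀`
  refine (continuousAt_of_dominated (bound := poissonWeight x (y₀ / 2)) ?_ ?_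
    (integrable_poissonWeight hM hy₀') (ae_of_all _ fun s => ?_)).continuousWithinAt
  · filter_upwards [hnear] with y hy
    exact (continuous_poissonWeight (hy₀'.trans hy)).aestronglyMeasurable
  · filter_upwards [hnear] with y hy
    refine ae_of_all _ fun s => ?_
    rw [Real.norm_of_nonneg poissonWeight_nonneg]
    exact poissonWeight_antitoneOn x s hy₀' (hy₀'.trans hy) hy.le
  · unfold poissonWeight
    exact ContinuousAt.div (by fun_prop) (by fun_prop) (by positivity)

lemma posSublevel_poissonIntegral_nonempty (hM : ∀ᵐ s ∂ρ, |s| ≤ M) (ha : 0 < a) :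
    (posSublevel (poissonIntegral ρ x) a).Nonempty := by
  set B := (M ^ 2 + 1) * ρ.real univ
  set y := √(B / a) + 1
  have hy : 0 < y := by positivity
  have hBy : B ≤ a * y ^ 2 := by
    rw [← div_le_iff₀' ha]
    nlinarith [Real.sq_sqrt (by positivity : 0 ≤ B / a), Real.sqrt_nonneg (B / a)]
  refine ⟨y, hy, (poissonIntegral_le hM hy).trans ?_⟩
  rw [div_le_iff₀ (by positivity)]
  nlinarith [sq_nonneg (max (|x| - M) 0)]

lemma abs_le_of_le_poissonIntegral (hM : ∀ᵐ s ∂ρ, |s| ≤ M) (hy : 0 < y) (ha : 0 < a)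
    (h : a ≤ poissonIntegral ρ x y) :
    |x| ≤ M + √((M ^ 2 + 1) * ρ.real univ / a) := by
  have hsq : max (|x| - M) 0 ^ 2 ≤ (M ^ 2 + 1) * ρ.real univ / a := by
    rw [le_div_iff₀ ha]
    have := h.trans (poissonIntegral_le hM hy)
    rw [le_div_iff₀ (by positivity)] at this
    nlinarith [sq_nonneg y]
  have := Real.le_sqrt_of_sq_le hsq
  linarith [le_max_left (|x| - M) 0]

lemma poissonIntegral_mul_le {l f c D : ℝ} (hM : ∀ᵐ s ∂ρ, |s| ≤ M)
    (hxs : ∀ᵐ s ∂ρ, |x - s| ≤ D) (hc : 0 < c) (hcf : c ≤ f) (hl : 1 ≤ l) :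
    poissonIntegral ρ x (l * f) ≤
      (D ^ 2 + c ^ 2) / (D ^ 2 + l ^ 2 * c ^ 2) * poissonIntegral ρ x f := by
  have hf : 0 < f := hc.trans_le hcf
  rw [poissonIntegral, poissonIntegral, ← integral_const_mul]
  refine integral_mono_ae (integrable_poissonWeight hM (by positivity))
    ((integrable_poissonWeight hM hf).const_mul _) ?_
  filter_upwards [hxs] with s hs using poissonWeight_mul_le hs hc hcf hl

end poissonIntegral

lemma exists_ae_abs_le_of_isCompact {ρ : Measure ℝ} {K : Set ℝ} (hK : IsCompact K)
    (hρK : ρ Kᶜ = 0) : ∃ M, ∀ᵐ s ∂ρ, |s| ≤ M := by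
  obtain ⟨M, hM⟩ := hK.isBounded.exists_norm_le
  exact ⟨M, (ae_iff.mpr hρK).mono hM⟩

lemma mul_one_div_sub_one_le {κ t r : ℝ} (hκ : 0 < κ) (ht : 1 < t) (htr : t < r)
    (hr : r < t + (t - 1) * (κ⁻¹ - 1)) : κ * (1 / (t - 1)) ≤ 1 / (r - 1) := by
  have hr' : r - 1 < (t - 1) * κ⁻¹ := by linarith
  rw [mul_one_div, div_le_div_iff₀ (by linarith) (by linarith), one_mul]
  calc κ * (r - 1) ≤ κ * ((t - 1) * κ⁻¹) := by gcongr
    _ = t - 1 := by field_simp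

lemma fFn_eq_levelInf (ρ : Measure ℝ) (t x : ℝ) :
    fFn ρ t x = levelInf (poissonIntegral ρ x) (1 / (t - 1)) := rfl

theorem f_right_continuity_general (ρ : Measure ℝ) [IsFiniteMeasure ρ]
    (K : Set ℝ) (hK : IsCompact K) (hρK : ρ Kᶜ = 0)
    (t : ℝ) (ht : 1 < t) (c : ℝ) (hc : 0 < c) (ε : ℝ) (hε : 0 < ε) :
    ∃ δ : ℝ, 0 < δ ∧ ∀ r : ℝ, t < r → r < t + δ → ∀ x : ℝ, c ≤ fFn ρ t x →
      fFn ρ t x < fFn ρ r x ∧ fFn ρ r x ≤ (1 + ε) * fFn ρ t x := by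
  obtain ⟨M, hM⟩ := exists_ae_abs_le_of_isCompact hK hρK
  have ha : 0 < 1 / (t - 1) := one_div_pos.mpr (sub_pos.mpr ht)
  set D := M + √((M ^ 2 + 1) * ρ.real univ / (1 / (t - 1))) + M with hD
  set κ := (D ^ 2 + c ^ 2) / (D ^ 2 + (1 + ε) ^ 2 * c ^ 2)
  have hκ : 0 < κ := by positivity
  have hκ1 : κ < 1 := by
    have hε2 : 1 < (1 + ε) ^ 2 := one_lt_pow₀ (by linarith) two_ne_zero
    exact (div_lt_one (by positivity)).mpr (by nlinarith [sq_pos_of_pos hc])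
  refine ⟨(t - 1) * (κ⁻¹ - 1),
    mul_pos (sub_pos.mpr ht) (sub_pos.mpr ((one_lt_inv₀ hκ).mpr hκ1)), ?_⟩
  intro r htr hrδ x hcf
  rw [fFn_eq_levelInf] at hcf ⊢
  have hf : 0 < levelInf (poissonIntegral ρ x) (1 / (t - 1)) := hc.trans_le hcf
  have hFf := apply_levelInf (poissonIntegral_antitoneOn hM) (continuousOn_poissonIntegral hM)
    (posSublevel_poissonIntegral_nonempty hM ha) hf
  have hxs : ∀ᵐ s ∂ρ, |x - s| ≤ D := by
    have hx := abs_le_of_le_poissonIntegral hM hf ha hFf.ge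
    filter_upwards [hM] with s hs
    linarith [abs_sub x s, hD]
  have hr : 1 / (r - 1) < 1 / (t - 1) := one_div_lt_one_div_of_lt (sub_pos.mpr ht) (by linarith)
  refine ⟨levelInf_lt_levelInf (poissonIntegral_antitoneOn hM) (continuousOn_poissonIntegral hM)
      (posSublevel_poissonIntegral_nonempty hM (one_div_pos.mpr (by linarith))) hr hf,
    levelInf_le (by positivity) ?_⟩
  calc poissonIntegral ρ x ((1 + ε) * _) ≤ κ * poissonIntegral ρ x _ :=
        poissonIntegral_mul_le hM hxs hc hcf (by linarith)
    _ ≤ 1 / (r - 1) := by rw [hFf]; exact mul_one_div_sub_one_le hκ ht htr hrδ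

/-- right continuity in `t`, uniformly on `{f_t ≥ c}`. -/
theorem f_right_continuity (ρ : Measure ℝ) [IsFiniteMeasure ρ] (hρ : ρ ≠ 0)
    (K : Set ℝ) (hK : IsCompact K) (hρK : ρ Kᶜ = 0)
    (t : ℝ) (ht : 1 < t) (c : ℝ) (hc : 0 < c) (ε : ℝ) (hε : 0 < ε) :
    ∃ δ : ℝ, 0 < δ ∧ ∀ r : ℝ, t < r → r < t + δ → ∀ x : ℝ, c ≤ fFn ρ t x →
      fFn ρ t x < fFn ρ r x ∧ fFn ρ r x ≤ (1 + ε) * fFn ρ t x :=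
  f_right_continuity_general ρ K hK hρK t ht c hc ε hε
end

section
/- Tail estimate: let t > 1, x ∈ ℝ, and suppose 0 < f_t(x) ≤ y. Then ∫_{{s ∈ ℝ : (x−s)² ≥ y}} (s²+1) · [ 1/((x−s)² + f_t(x)²) − 1/((x−s)² + y²) ] dρ(s) ≤ √(y² − f_t(x)²) / (t−1). -/
/-!
Write `F(c) = ∫ (s²+1)/((x-s)²+c²) dρ(s)`. For `c ≠ 0` the integrand is bounded and continuous
in `s`, so `F` is finite on a finite measure and, by dominated convergence, continuous at every
`c ≠ 0`. As `a = f_t(x) > 0` lies in the closure of `{c > 0 | F(c) ≤ 1/(t-1)}`, also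
`F(a) ≤ 1/(t-1)`. Where `(x-s)² ≥ y`, the tail integrand equals
`(s²+1)/((x-s)²+a²) · (y²-a²)/((x-s)²+y²)`, and the last factor is at most `√(y²-a²)` because
`√(y²-a²) ≤ y ≤ (x-s)²`.
-/

open MeasureTheory Filter Topology Set

noncomputable def cauchyWeight (x c s : ℝ) : ℝ := (s ^ 2 + 1) / ((x - s) ^ 2 + c ^ 2)

variable {ρ : Measure ℝ} {x c d s : ℝ}

lemma cauchyWeight_nonneg : 0 ≤ cauchyWeight x c s := by
  unfold cauchyWeight; positivity

lemma continuous_cauchyWeight (hc : c ≠ 0) : Continuous (cauchyWeight x c) :=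
  Continuous.div (by fun_prop) (by fun_prop) fun s => by positivity

lemma continuousAt_cauchyWeight_height (hc : c ≠ 0) :
    ContinuousAt (fun d => cauchyWeight x d s) c :=
  ContinuousAt.div (by fun_prop) (by fun_prop) (by positivity)

lemma cauchyWeight_le_of_le_sq (hc : 0 < c) (hcd : c ≤ d ^ 2) :
    cauchyWeight x d s ≤ 2 + (2 * x ^ 2 + 1) / c := by
  have hd : 0 < (x - s) ^ 2 + d ^ 2 := add_pos_of_nonneg_of_pos (sq_nonneg _) (hc.trans_le hcd)
  have hquot : (2 * x ^ 2 + 1) / c * ((x - s) ^ 2 + d ^ 2) ≥ 2 * x ^ 2 + 1 := by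
    rw [div_mul_eq_mul_div, ge_iff_le, le_div_iff₀ hc]
    nlinarith [sq_nonneg (x - s)]
  rw [cauchyWeight, div_le_iff₀ hd]
  -- `s² ≤ 2 (x - s)² + 2 x²` is `(2 x - s)² ≥ 0`
  nlinarith [sq_nonneg (2 * x - s), sq_nonneg d]

lemma integrable_cauchyWeight [IsFiniteMeasure ρ] (hc : c ≠ 0) :
    Integrable (cauchyWeight x c) ρ :=
  (integrable_const (2 + (2 * x ^ 2 + 1) / c ^ 2)).mono'
    (continuous_cauchyWeight hc).aestronglyMeasurable
    (Eventually.of_forall fun _ => by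
      rw [Real.norm_of_nonneg cauchyWeight_nonneg]
      exact cauchyWeight_le_of_le_sq (by positivity) le_rfl)

lemma continuousAt_integral_cauchyWeight [IsFiniteMeasure ρ] (hc : c ≠ 0) :
    ContinuousAt (fun d => ∫ s, cauchyWeight x d s ∂ρ) c := by
  have hc2 : 0 < c ^ 2 / 4 := div_pos (sq_pos_of_ne_zero hc) four_pos
  have hnear : ∀ᶠ d in 𝓝 c, c ^ 2 / 4 < d ^ 2 :=
    (continuous_pow 2).continuousAt.eventually_const_lt (by linarith)
  refine continuousAt_of_dominated (bound := fun _ => 2 + (2 * x ^ 2 + 1) / (c ^ 2 / 4)) ?_ ?_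
    (integrable_const _) (Eventually.of_forall fun _ => continuousAt_cauchyWeight_height hc)
  · filter_upwards [hnear] with d hd
    have hd0 : d ≠ 0 := by rintro rfl; nlinarith [sq_nonneg c]
    exact (continuous_cauchyWeight hd0).aestronglyMeasurable
  · filter_upwards [hnear] with d hd
    refine Eventually.of_forall fun s => ?_
    rw [Real.norm_of_nonneg cauchyWeight_nonneg]
    exact cauchyWeight_le_of_le_sq hc2 hd.le

lemma integral_cauchyWeight_fFn_le [IsFiniteMeasure ρ] {t : ℝ} (hf : 0 < fFn ρ t x) :
    ∫ s, cauchyWeight x (fFn ρ t x) s ∂ρ ≤ 1 / (t - 1) := by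
  set S := {y : ℝ | 0 < y ∧ ∫ s, cauchyWeight x y s ∂ρ ≤ 1 / (t - 1)}
  have hS : fFn ρ t x = sInf S := rfl
  have hne : S.Nonempty := by
    by_contra h
    rw [not_nonempty_iff_eq_empty.mp h, Real.sInf_empty] at hS
    exact hf.ne' hS
  have hmem := csInf_mem_closure hne ⟨0, fun y hy => hy.1.le⟩
  rw [hS] at hf ⊢
  exact (continuousAt_integral_cauchyWeight hf.ne').continuousWithinAt.closure_le hmem
    continuousWithinAt_const fun y hy => hy.2

lemma tail_integrand_le (hc : 0 < c) (hcd : c ≤ d) (hs : d ≤ (x - s) ^ 2) :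
    (s ^ 2 + 1) * (1 / ((x - s) ^ 2 + c ^ 2) - 1 / ((x - s) ^ 2 + d ^ 2))
      ≤ √(d ^ 2 - c ^ 2) * cauchyWeight x c s := by
  set r := √(d ^ 2 - c ^ 2)
  have hr2 : r ^ 2 = d ^ 2 - c ^ 2 := Real.sq_sqrt (by nlinarith)
  have hrd : r ≤ d := Real.sqrt_le_iff.mpr ⟨by linarith, by nlinarith⟩
  have hd : 0 < d := hc.trans_le hcd
  have hD : 0 < (x - s) ^ 2 + d ^ 2 := by positivity
  have hfactor : (d ^ 2 - c ^ 2) / ((x - s) ^ 2 + d ^ 2) ≤ r := by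
    rw [div_le_iff₀ hD, ← hr2, sq]
    exact mul_le_mul_of_nonneg_left (by nlinarith) (Real.sqrt_nonneg _)
  have hsplit : (s ^ 2 + 1) * (1 / ((x - s) ^ 2 + c ^ 2) - 1 / ((x - s) ^ 2 + d ^ 2))
      = cauchyWeight x c s * ((d ^ 2 - c ^ 2) / ((x - s) ^ 2 + d ^ 2)) := by
    unfold cauchyWeight
    field_simp
    ring
  rw [hsplit, mul_comm r]
  exact mul_le_mul_of_nonneg_left hfactor cauchyWeight_nonneg

theorem tail_estimate_general (ρ : Measure ℝ) [IsFiniteMeasure ρ]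
    (t : ℝ) (x : ℝ) (y : ℝ)
    (hf : 0 < fFn ρ t x) (hy : fFn ρ t x ≤ y) :
    (∫ s in {s : ℝ | y ≤ (x - s) ^ 2},
        (s ^ 2 + 1) * (1 / ((x - s) ^ 2 + (fFn ρ t x) ^ 2) - 1 / ((x - s) ^ 2 + y ^ 2)) ∂ρ)
      ≤ Real.sqrt (y ^ 2 - (fFn ρ t x) ^ 2) / (t - 1) := by
  set a := fFn ρ t x
  set r := √(y ^ 2 - a ^ 2)
  have hE : MeasurableSet {s : ℝ | y ≤ (x - s) ^ 2} := measurableSet_le (by fun_prop) (by fun_prop)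
  have hga := integrable_cauchyWeight (ρ := ρ) (x := x) hf.ne'
  have htail : Integrable (fun s => (s ^ 2 + 1) *
      (1 / ((x - s) ^ 2 + a ^ 2) - 1 / ((x - s) ^ 2 + y ^ 2))) ρ := by
    simpa only [Pi.sub_def, cauchyWeight, mul_sub, mul_one_div] using
      hga.sub (integrable_cauchyWeight (hf.trans_le hy).ne')
  calc _ ≤ ∫ s in {s : ℝ | y ≤ (x - s) ^ 2}, r * cauchyWeight x a s ∂ρ :=
        setIntegral_mono_on htail.integrableOn (hga.const_mul r).integrableOn hE
          fun s hs => tail_integrand_le hf hy hs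
    _ ≤ ∫ s, r * cauchyWeight x a s ∂ρ :=
        setIntegral_le_integral (hga.const_mul r)
          (Eventually.of_forall fun _ => mul_nonneg (Real.sqrt_nonneg _) cauchyWeight_nonneg)
    _ = r * ∫ s, cauchyWeight x a s ∂ρ := integral_const_mul r _
    _ ≤ r * (1 / (t - 1)) :=
        mul_le_mul_of_nonneg_left (integral_cauchyWeight_fFn_le hf) (Real.sqrt_nonneg _)
    _ = r / (t - 1) := mul_one_div r _

/-- tail estimate. -/
theorem tail_estimate (ρ : Measure ℝ) [IsFiniteMeasure ρ] (hρ : ρ ≠ 0)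
    (K : Set ℝ) (hK : IsCompact K) (hρK : ρ Kᶜ = 0)
    (t : ℝ) (ht : 1 < t) (x : ℝ) (y : ℝ)
    (hf : 0 < fFn ρ t x) (hy : fFn ρ t x ≤ y) :
    (∫ s in {s : ℝ | y ≤ (x - s) ^ 2},
        (s ^ 2 + 1) * (1 / ((x - s) ^ 2 + (fFn ρ t x) ^ 2) - 1 / ((x - s) ^ 2 + y ^ 2)) ∂ρ)
      ≤ Real.sqrt (y ^ 2 - (fFn ρ t x) ^ 2) / (t - 1) :=
  tail_estimate_general ρ t x y hf hy
end

section
/- Hausdorff continuity of the graphs of f_t: assume in addition that ρ has only finitely many atoms. For t > 1 let Γ_t = { (x, f_t(x)) : x ∈ V_t⁺ } ⊆ ℝ². Then for every t > 1 and every ε > 0 there exists δ > 0 such that for all r > 1 with |r − t| < δ, Γ_r is contained in the open ε-thickening { p ∈ ℝ² : ∃ q ∈ Γ_t, ‖p − q‖ < ε } of Γ_t (with respect to the Euclidean norm on ℝ²), and Γ_t is contained in the open ε-thickening of Γ_r. -/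
/-!
Write `F(x, y) = ∫ (s²+1)/((x-s)²+y²) dρ(s)` (`kernelInt`). For `y > 0`, `F` is continuous and
strictly decreasing in `y`, tends to `0` as `y → ∞` and increases to `g(x)` as `y → 0`, so `Γ_t`
is the level set `{y > 0, F = 1/(t-1)}`. By sequential compactness, Hausdorff continuity of these
level sets reduces to a local statement: if points `p_n` of the upper half plane with `F p_n → c`
converge to `q`, then the half-ball of radius `ε` around `q` contains points with `F < c` and
points with `F > c`, hence, being connected, meets every level close to `c`. Above `q` the
monotonicity in `y` gives both. If `q = (a, 0)` lies on the axis, either `ρ` charges every interval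
around `a`, and then `g` is unbounded near `a` since `∫ g` over such an interval is infinite
(Tonelli, as `1/(x-s)²` is not integrable at `s`); or `F(·, 0)` is continuous near `a` with
`F(a, 0) = c`, and its strict midpoint convexity puts it above `c` on one side of `a`.
-/

open MeasureTheory

/-- The graph `Γ_t = { (x, f_t(x)) : x ∈ V_t⁺ } ⊆ ℝ²`. -/
noncomputable def graphF (ρ : Measure ℝ) (t : ℝ) : Set (ℝ × ℝ) :=
  {p : ℝ × ℝ | p.1 ∈ Vplus ρ t ∧ p.2 = fFn ρ t p.1}

/-- The open `ε`-thickening of a subset of `ℝ²`, with respect to the Euclidean norm. -/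
def thick2 (ε : ℝ) (A : Set (ℝ × ℝ)) : Set (ℝ × ℝ) :=
  {p : ℝ × ℝ | ∃ q ∈ A, Real.sqrt ((p.1 - q.1) ^ 2 + (p.2 - q.2) ^ 2) < ε}

open Filter Topology Set Function

theorem integral_lt_integral_of_ae_lt {α : Type*} [MeasurableSpace α] {μ : Measure α}
    (hμ : μ ≠ 0) {f g : α → ℝ} (hf : Integrable f μ) (hg : Integrable g μ)
    (h : ∀ᵐ x ∂μ, f x < g x) : ∫ x, f x ∂μ < ∫ x, g x ∂μ := by
  rw [← sub_pos, ← integral_sub hg hf,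
    integral_pos_iff_support_of_nonneg_ae (h.mono fun x hx => (sub_pos.2 hx).le) (hg.sub hf),
    pos_iff_ne_zero]
  intro h0
  have : ∀ᵐ x ∂μ, False := by
    filter_upwards [measure_eq_zero_iff_ae_notMem.1 h0, h] with x hx hlt
    exact hx (sub_ne_zero.2 hlt.ne')
  exact hμ (ae_eq_bot.1 (eventually_false_iff_eq_bot.1 this))

theorem sq_le_add_sq_of_le_dist {x y s η : ℝ} (hη : 0 ≤ η) (h : η ≤ dist (x, y) (s, 0)) :
    η ^ 2 ≤ (x - s) ^ 2 + y ^ 2 := by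
  rw [Prod.dist_eq, Real.dist_eq, Real.dist_eq, sub_zero, le_max_iff] at h
  rcases h with h | h
  · nlinarith [sq_abs (x - s), sq_nonneg y, pow_le_pow_left₀ hη h 2]
  · nlinarith [sq_abs y, sq_nonneg (x - s), pow_le_pow_left₀ hη h 2]

theorem abs_snd_le_dist (x y s : ℝ) : |y| ≤ dist (x, y) (s, 0) := by
  rw [Prod.dist_eq, Real.dist_eq, Real.dist_eq, sub_zero]
  exact le_max_right _ _

theorem kernel_le_of_le_dist {x y s R η : ℝ} (hs : |s| ≤ R) (hη : 0 < η)
    (h : η ≤ dist (x, y) (s, 0)) :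
    (s ^ 2 + 1) / ((x - s) ^ 2 + y ^ 2) ≤ (R ^ 2 + 1) / η ^ 2 := by
  have hsR : s ^ 2 ≤ R ^ 2 := by nlinarith [sq_abs s, abs_nonneg s]
  exact div_le_div₀ (by positivity) (by linarith) (by positivity)
    (sq_le_add_sq_of_le_dist hη.le h)

theorem kernel_nonneg (x y s : ℝ) : 0 ≤ (s ^ 2 + 1) / ((x - s) ^ 2 + y ^ 2) := by positivity

theorem tendsto_div_sq_mul_atTop (a b : ℝ) : Tendsto (fun y : ℝ => a / y ^ 2 * b) atTop (𝓝 0) := by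
  simpa using (tendsto_const_nhds.div_atTop (tendsto_pow_atTop two_ne_zero)).mul_const b

theorem setLIntegral_kernel_eq_top {a b s : ℝ} (hs : s ∈ Ioo a b) :
    ∫⁻ x in Ioo a b, ENNReal.ofReal (s ^ 2 + 1) / ENNReal.ofReal ((x - s) ^ 2) = ⊤ := by
  have hab : a < b := hs.1.trans hs.2
  have hbigO : (fun x => (x - s)⁻¹) =O[𝓝[≠] s] fun x => (s ^ 2 + 1) / (x - s) ^ 2 := by
    refine Asymptotics.IsBigO.of_bound 1 ?_
    filter_upwards [self_mem_nhdsWithin, nhdsWithin_le_nhds (Metric.closedBall_mem_nhds s one_pos)]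
      with x (hx : x ≠ s) (hx1 : dist x s ≤ 1)
    rw [Real.dist_eq] at hx1
    have hpos : 0 < |x - s| := abs_pos.2 (sub_ne_zero.2 hx)
    rw [one_mul, norm_inv, Real.norm_eq_abs, Real.norm_of_nonneg (by positivity), ← sq_abs (x - s),
      inv_eq_one_div, div_le_div_iff₀ hpos (by positivity)]
    nlinarith [sq_nonneg s, mul_le_mul_of_nonneg_left hx1 hpos.le]
  have hnot : ¬ IntegrableOn (fun x => (s ^ 2 + 1) / (x - s) ^ 2) (Ioo a b) := by
    rw [← intervalIntegrable_iff_integrableOn_Ioo_of_le hab.le]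
    exact not_intervalIntegrable_of_sub_inv_isBigO_punctured hbigO hab.ne
      (Icc_subset_uIcc (Ioo_subset_Icc_self hs))
  refine eq_top_iff.2 (le_trans ?_ (setLIntegral_mono' measurableSet_Ioo fun x _ =>
    ENNReal.ofReal_div_le (sq_nonneg (x - s))))
  rw [top_le_iff, ← not_ne_iff, lintegral_ofReal_ne_top_iff_integrable
    (Measurable.aestronglyMeasurable (by fun_prop)) (.of_forall fun x => by positivity)]
  exact hnot

theorem two_mul_div_sq_lt_add {W u h : ℝ} (hW : 0 < W) (hh : 0 < h) (hu : h < |u|) :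
    2 * (W / u ^ 2) < W / (u + h) ^ 2 + W / (u - h) ^ 2 := by
  have hhu : h ^ 2 < u ^ 2 := by nlinarith [sq_abs u]
  have hu2 : 0 < u ^ 2 := by nlinarith
  have hp : 0 < (u + h) ^ 2 := by
    have : u + h ≠ 0 := fun h0 => by nlinarith [show u = -h by linarith]
    positivity
  have hm : 0 < (u - h) ^ 2 := by
    have : u - h ≠ 0 := fun h0 => by nlinarith [show u = h by linarith]
    positivity
  have key : (u ^ 2 - h ^ 2) ^ 2 < (u ^ 2 + h ^ 2) * u ^ 2 := by
    nlinarith [mul_pos (pow_pos hh 2) (sub_pos.2 hhu)]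
  rw [div_add_div _ _ hp.ne' hm.ne', mul_div_assoc', div_lt_div_iff₀ (by positivity)
    (mul_pos hp hm)]
  nlinarith [mul_lt_mul_of_pos_left key hW]

theorem dist_mk_zero (x s : ℝ) : dist ((x, 0) : ℝ × ℝ) (s, 0) = |x - s| := by
  simp [Prod.dist_eq, Real.dist_eq]

theorem IsCompact.exists_ae_abs_le {μ : Measure ℝ} {K : Set ℝ} (hK : IsCompact K)
    (hμK : μ Kᶜ = 0) : ∃ R, ∀ᵐ s ∂μ, |s| ≤ R := by
  obtain ⟨R, hR⟩ := hK.isBounded.subset_closedBall 0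
  exact ⟨R, mem_of_superset (mem_ae_iff.2 hμK) fun s hs => by simpa using hR hs⟩

theorem thickening_half_subset_thick2 {ε : ℝ} (A : Set (ℝ × ℝ)) :
    Metric.thickening (ε / 2) A ⊆ thick2 ε A := by
  intro p hp
  obtain ⟨q, hq, hpq⟩ := Metric.mem_thickening_iff.1 hp
  rw [Prod.dist_eq, Real.dist_eq, Real.dist_eq, max_lt_iff] at hpq
  refine ⟨q, hq, (Real.sqrt_le_left (by positivity)).2 ?_ |>.trans_lt
    (show |p.1 - q.1| + |p.2 - q.2| < ε by linarith)⟩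
  nlinarith [sq_abs (p.1 - q.1), sq_abs (p.2 - q.2), abs_nonneg (p.1 - q.1),
    abs_nonneg (p.2 - q.2)]

noncomputable def kernelInt (ρ : Measure ℝ) (x y : ℝ) : ℝ :=
  ∫ s, (s ^ 2 + 1) / ((x - s) ^ 2 + y ^ 2) ∂ρ

def levelSet (ρ : Measure ℝ) (c : ℝ) : Set (ℝ × ℝ) :=
  {p | 0 < p.2 ∧ kernelInt ρ p.1 p.2 = c}

theorem kernelInt_nonneg {ρ : Measure ℝ} (x y : ℝ) : 0 ≤ kernelInt ρ x y :=
  integral_nonneg fun s => kernel_nonneg x y s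

section kernelInt

variable {ρ : Measure ℝ} [IsFiniteMeasure ρ] {R : ℝ}

theorem integrable_kernel (hae : ∀ᵐ s ∂ρ, |s| ≤ R) {x y η : ℝ} (hη : 0 < η)
    (hfar : ∀ᵐ s ∂ρ, η ≤ dist (x, y) (s, 0)) :
    Integrable (fun s => (s ^ 2 + 1) / ((x - s) ^ 2 + y ^ 2)) ρ := by
  refine (integrable_const ((R ^ 2 + 1) / η ^ 2)).mono'
    (Measurable.aestronglyMeasurable (by fun_prop)) ?_
  filter_upwards [hae, hfar] with s hs hsη
  rw [Real.norm_of_nonneg (kernel_nonneg x y s)]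
  exact kernel_le_of_le_dist hs hη hsη

theorem integrable_kernel_of_ne_zero (hae : ∀ᵐ s ∂ρ, |s| ≤ R) (x : ℝ) {y : ℝ} (hy : y ≠ 0) :
    Integrable (fun s => (s ^ 2 + 1) / ((x - s) ^ 2 + y ^ 2)) ρ :=
  integrable_kernel hae (abs_pos.2 hy) (.of_forall fun s => abs_snd_le_dist x y s)

theorem kernelInt_le_of_le_dist (hae : ∀ᵐ s ∂ρ, |s| ≤ R) {x y η : ℝ} (hη : 0 < η)
    (hfar : ∀ᵐ s ∂ρ, η ≤ dist (x, y) (s, 0)) :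
    kernelInt ρ x y ≤ (R ^ 2 + 1) / η ^ 2 * ρ.real univ := by
  calc kernelInt ρ x y ≤ ∫ _, (R ^ 2 + 1) / η ^ 2 ∂ρ := by
        refine integral_mono_ae (integrable_kernel hae hη hfar) (integrable_const _) ?_
        filter_upwards [hae, hfar] with s hs hsη using kernel_le_of_le_dist hs hη hsη
    _ = _ := by rw [integral_const, smul_eq_mul, mul_comm]

theorem continuousAt_kernelInt (hae : ∀ᵐ s ∂ρ, |s| ≤ R) {p₀ : ℝ × ℝ} {η : ℝ} (hη : 0 < η)
    (hfar : ∀ᵐ s ∂ρ, η ≤ dist p₀ (s, 0)) : ContinuousAt (uncurry (kernelInt ρ)) p₀ := by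
  have hnear : ∀ᶠ p in 𝓝 p₀, ∀ᵐ s ∂ρ, η / 2 ≤ dist p (s, 0) := by
    filter_upwards [Metric.ball_mem_nhds p₀ (half_pos hη)] with p hp
    filter_upwards [hfar] with s hs
    linarith [dist_triangle p₀ p (s, 0), dist_comm p p₀, Metric.mem_ball.1 hp]
  refine tendsto_integral_filter_of_dominated_convergence (fun _ => (R ^ 2 + 1) / (η / 2) ^ 2)
    (.of_forall fun p => Measurable.aestronglyMeasurable (by fun_prop)) ?_ (integrable_const _) ?_
  · filter_upwards [hnear] with p hp
    filter_upwards [hae, hp] with s hs hsη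
    rw [Real.norm_of_nonneg (kernel_nonneg _ _ s)]
    exact kernel_le_of_le_dist hs (half_pos hη) hsη
  · filter_upwards [hfar] with s hs
    have hpos : 0 < (p₀.1 - s) ^ 2 + p₀.2 ^ 2 :=
      (pow_pos hη 2).trans_le (sq_le_add_sq_of_le_dist hη.le hs)
    exact ContinuousAt.tendsto (f := fun p : ℝ × ℝ => (s ^ 2 + 1) / ((p.1 - s) ^ 2 + p.2 ^ 2))
      (by fun_prop (disch := exact hpos.ne'))

theorem continuousAt_kernelInt_of_ne_zero (hae : ∀ᵐ s ∂ρ, |s| ≤ R) {p₀ : ℝ × ℝ}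
    (hy : p₀.2 ≠ 0) : ContinuousAt (uncurry (kernelInt ρ)) p₀ :=
  continuousAt_kernelInt hae (abs_pos.2 hy) (.of_forall fun s => abs_snd_le_dist p₀.1 p₀.2 s)

theorem strictAntiOn_kernelInt (hae : ∀ᵐ s ∂ρ, |s| ≤ R) (hρ : ρ ≠ 0) (x : ℝ) :
    StrictAntiOn (kernelInt ρ x) (Ioi 0) := by
  intro y₁ (hy₁ : 0 < y₁) y₂ (hy₂ : 0 < y₂) hlt
  refine integral_lt_integral_of_ae_lt hρ (integrable_kernel_of_ne_zero hae x hy₂.ne')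
    (integrable_kernel_of_ne_zero hae x hy₁.ne') (.of_forall fun s => ?_)
  exact div_lt_div_of_pos_left (by positivity) (by positivity) (by gcongr)

theorem tendsto_kernelInt_atTop (hae : ∀ᵐ s ∂ρ, |s| ≤ R) (x : ℝ) :
    Tendsto (kernelInt ρ x) atTop (𝓝 0) := by
  refine tendsto_of_tendsto_of_tendsto_of_le_of_le' tendsto_const_nhds
    (tendsto_div_sq_mul_atTop (R ^ 2 + 1) (ρ.real univ))
    (.of_forall fun y => kernelInt_nonneg x y) ?_
  filter_upwards [eventually_gt_atTop 0] with y hy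
  simpa [abs_of_pos hy] using
    kernelInt_le_of_le_dist hae (abs_pos.2 hy.ne') (.of_forall fun s => abs_snd_le_dist x y s)

theorem isBounded_setOf_le_kernelInt (hae : ∀ᵐ s ∂ρ, |s| ≤ R) {c : ℝ} (hc : 0 < c) :
    Bornology.IsBounded {p : ℝ × ℝ | c ≤ uncurry (kernelInt ρ) p} := by
  obtain ⟨η, hηc, hη⟩ := (((tendsto_div_sq_mul_atTop (R ^ 2 + 1) (ρ.real univ)).eventually
    (gt_mem_nhds hc)).and (eventually_gt_atTop 0)).exists
  refine (Metric.isBounded_closedBall (x := 0) (r := R + η)).subset fun p hp => ?_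
  by_contra hfar
  rw [Metric.mem_closedBall, not_le] at hfar
  have hle : ∀ᵐ s ∂ρ, η ≤ dist (p.1, p.2) (s, 0) := by
    filter_upwards [hae] with s hs
    have : dist ((s, 0) : ℝ × ℝ) 0 = |s| := by simp
    linarith [dist_triangle p (s, 0) 0]
  exact (hηc.trans_le' (kernelInt_le_of_le_dist hae hη hle)).not_ge hp

theorem continuousOn_kernelInt_Ioi (hae : ∀ᵐ s ∂ρ, |s| ≤ R) (x : ℝ) :
    ContinuousOn (kernelInt ρ x) (Ioi 0) := fun y (hy : 0 < y) =>
  ((continuousAt_kernelInt_of_ne_zero (p₀ := (x, y)) hae hy.ne').comp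
    (Continuous.prodMk_right x).continuousAt).continuousWithinAt

theorem ofReal_kernelInt_le_gFn (hae : ∀ᵐ s ∂ρ, |s| ≤ R) (x : ℝ) {y : ℝ} (hy : y ≠ 0) :
    ENNReal.ofReal (kernelInt ρ x y) ≤ gFn ρ x := by
  rw [kernelInt, ofReal_integral_eq_lintegral_ofReal (integrable_kernel_of_ne_zero hae x hy)
    (.of_forall fun s => kernel_nonneg x y s)]
  refine lintegral_mono fun s => (ENNReal.ofReal_div_le (by positivity)).trans ?_
  exact ENNReal.div_le_div_left (ENNReal.ofReal_le_ofReal (le_add_of_nonneg_right (sq_nonneg y))) _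

theorem tendsto_ofReal_kernelInt_gFn (hae : ∀ᵐ s ∂ρ, |s| ≤ R) (x : ℝ) :
    Tendsto (fun n : ℕ => ENNReal.ofReal (kernelInt ρ x (1 / (n + 1)))) atTop (𝓝 (gFn ρ x)) := by
  have hrepr : ∀ n : ℕ, ENNReal.ofReal (kernelInt ρ x (1 / (n + 1))) =
      ∫⁻ s, ENNReal.ofReal (s ^ 2 + 1) / ENNReal.ofReal ((x - s) ^ 2 + (1 / (n + 1)) ^ 2) ∂ρ := by
    intro n
    rw [kernelInt, ofReal_integral_eq_lintegral_ofReal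
      (integrable_kernel_of_ne_zero hae x Nat.one_div_pos_of_nat.ne')
      (.of_forall fun s => kernel_nonneg _ _ s)]
    exact lintegral_congr fun s => ENNReal.ofReal_div_of_pos (by positivity)
  simp_rw [hrepr]
  refine lintegral_tendsto_of_tendsto_of_monotone (fun n => by fun_prop)
    (.of_forall fun s m n hmn => ?_) (.of_forall fun s => ?_)
  · refine ENNReal.div_le_div_left (ENNReal.ofReal_le_ofReal ?_) _
    gcongr
  · have hden : Tendsto (fun n : ℕ => (x - s) ^ 2 + (1 / ((n : ℝ) + 1)) ^ 2) atTop
        (𝓝 ((x - s) ^ 2)) := by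
      simpa using tendsto_const_nhds.add (tendsto_one_div_add_atTop_nhds_zero_nat.pow 2 (M := ℝ))
    exact ENNReal.Tendsto.div tendsto_const_nhds (.inl (by positivity))
      (ENNReal.tendsto_ofReal hden) (.inl ENNReal.ofReal_ne_top)

theorem exists_lt_kernelInt_of_lt_gFn (hae : ∀ᵐ s ∂ρ, |s| ≤ R) {x c y₀ : ℝ}
    (h : ENNReal.ofReal c < gFn ρ x) (hy₀ : 0 < y₀) :
    ∃ y, 0 < y ∧ y < y₀ ∧ c < kernelInt ρ x y := by
  obtain ⟨n, hn, hlt⟩ := (((tendsto_ofReal_kernelInt_gFn hae x).eventually (lt_mem_nhds h)).and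
    (tendsto_one_div_add_atTop_nhds_zero_nat.eventually (gt_mem_nhds hy₀))).exists
  exact ⟨_, Nat.one_div_pos_of_nat, hlt, (ENNReal.ofReal_lt_ofReal_iff'.1 hn).1⟩

theorem fFn_eq_of_kernelInt_eq (hae : ∀ᵐ s ∂ρ, |s| ≤ R) (hρ : ρ ≠ 0) {t x y : ℝ} (hy : 0 < y)
    (h : kernelInt ρ x y = 1 / (t - 1)) : fFn ρ t x = y := by
  have hanti := strictAntiOn_kernelInt hae hρ x
  have hset : {z | 0 < z ∧ kernelInt ρ x z ≤ 1 / (t - 1)} = Ici y := by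
    ext z
    rw [← h]
    exact ⟨fun ⟨hz, hle⟩ => (hanti.le_iff_ge hz hy).1 hle,
      fun hz => ⟨hy.trans_le hz, hanti.antitoneOn hy (hy.trans_le hz) hz⟩⟩
  exact (congrArg sInf hset).trans csInf_Ici

theorem exists_kernelInt_eq_of_mem_Vplus (hae : ∀ᵐ s ∂ρ, |s| ≤ R) {t x : ℝ} (ht : 1 < t)
    (hx : x ∈ Vplus ρ t) : ∃ y, 0 < y ∧ kernelInt ρ x y = 1 / (t - 1) := by
  obtain ⟨y₀, hy₀, -, hlt⟩ := exists_lt_kernelInt_of_lt_gFn hae hx one_pos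
  obtain ⟨y₁, hgt, hy₁⟩ := (((tendsto_kernelInt_atTop hae x).eventually
    (gt_mem_nhds (one_div_pos.2 (sub_pos.2 ht)))).and (eventually_ge_atTop y₀)).exists
  obtain ⟨y, hy, hyc⟩ := intermediate_value_Icc' hy₁
    ((continuousOn_kernelInt_Ioi hae x).mono fun z hz => hy₀.trans_le hz.1) ⟨hgt.le, hlt.le⟩
  exact ⟨y, hy₀.trans_le hy.1, hyc⟩

theorem mem_Vplus_of_kernelInt_eq (hae : ∀ᵐ s ∂ρ, |s| ≤ R) (hρ : ρ ≠ 0) {t x y : ℝ} (hy : 0 < y)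
    (h : kernelInt ρ x y = 1 / (t - 1)) : x ∈ Vplus ρ t := by
  have hlt := strictAntiOn_kernelInt hae hρ x (half_pos hy) hy (half_lt_self hy)
  calc ENNReal.ofReal (1 / (t - 1)) < ENNReal.ofReal (kernelInt ρ x (y / 2)) := by
        rw [← h]
        exact ENNReal.ofReal_lt_ofReal_iff'.2 ⟨hlt, (kernelInt_nonneg x y).trans_lt hlt⟩
    _ ≤ gFn ρ x := ofReal_kernelInt_le_gFn hae x (half_pos hy).ne'

theorem graphF_eq_levelSet (hae : ∀ᵐ s ∂ρ, |s| ≤ R) (hρ : ρ ≠ 0) {t : ℝ} (ht : 1 < t) :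
    graphF ρ t = levelSet ρ (1 / (t - 1)) := by
  ext ⟨x, y⟩
  constructor
  · rintro ⟨hx, rfl : y = fFn ρ t x⟩
    obtain ⟨y', hy', h⟩ := exists_kernelInt_eq_of_mem_Vplus hae ht hx
    show 0 < fFn ρ t x ∧ kernelInt ρ x (fFn ρ t x) = 1 / (t - 1)
    rw [fFn_eq_of_kernelInt_eq hae hρ hy' h]
    exact ⟨hy', h⟩
  · rintro ⟨hy, h⟩
    exact ⟨mem_Vplus_of_kernelInt_eq hae hρ hy h, (fFn_eq_of_kernelInt_eq hae hρ hy h).symm⟩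

theorem setLIntegral_gFn_eq_top {a b : ℝ} (h : ρ (Ioo a b) ≠ 0) :
    ∫⁻ x in Ioo a b, gFn ρ x = ⊤ := by
  simp only [gFn]
  rw [lintegral_lintegral_swap (Measurable.aemeasurable (by fun_prop)), eq_top_iff]
  calc ⊤ = ∫⁻ _ in Ioo a b, ⊤ ∂ρ := by rw [setLIntegral_const, ENNReal.top_mul h]
    _ ≤ ∫⁻ s in Ioo a b, (∫⁻ x in Ioo a b,
          ENNReal.ofReal (s ^ 2 + 1) / ENNReal.ofReal ((x - s) ^ 2)) ∂ρ :=
        setLIntegral_mono' measurableSet_Ioo fun s hs => (setLIntegral_kernel_eq_top hs).ge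
    _ ≤ _ := setLIntegral_le_lintegral _ _

theorem exists_lt_gFn_of_measure_Ioo_ne_zero {a b : ℝ} (h : ρ (Ioo a b) ≠ 0) (c : ℝ) :
    ∃ x ∈ Ioo a b, ENNReal.ofReal c < gFn ρ x := by
  by_contra! hle
  refine (setLIntegral_gFn_eq_top h).not_lt ?_
  calc ∫⁻ x in Ioo a b, gFn ρ x ≤ ∫⁻ _ in Ioo a b, ENNReal.ofReal c :=
        setLIntegral_mono' measurableSet_Ioo hle
    _ < ⊤ := by simp [Real.volume_Ioo, ENNReal.mul_lt_top]

theorem two_mul_kernelInt_lt_add (hae : ∀ᵐ s ∂ρ, |s| ≤ R) (hρ : ρ ≠ 0) {a h : ℝ} (hh : 0 < h)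
    (hfar : ∀ᵐ s ∂ρ, 2 * h ≤ |a - s|) :
    2 * kernelInt ρ a 0 < kernelInt ρ (a + h) 0 + kernelInt ρ (a - h) 0 := by
  have hint : ∀ x, |x - a| ≤ h → Integrable (fun s => (s ^ 2 + 1) / ((x - s) ^ 2 + 0 ^ 2)) ρ := by
    refine fun x hx => integrable_kernel hae hh ?_
    filter_upwards [hfar] with s hs
    rw [dist_mk_zero]
    linarith [abs_sub_le a x s, abs_sub_comm x a]
  have h0 := hint a (by simp [hh.le])
  have hp := hint (a + h) (by simp [abs_of_pos hh])
  have hm := hint (a - h) (by simp [abs_of_pos hh])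
  rw [kernelInt, kernelInt, kernelInt, ← integral_const_mul, ← integral_add hp hm]
  refine integral_lt_integral_of_ae_lt hρ (h0.const_mul 2) (hp.add hm) ?_
  filter_upwards [hfar] with s hs
  rw [show a + h - s = a - s + h by ring, show a - h - s = a - s - h by ring]
  simpa using two_mul_div_sq_lt_add (W := s ^ 2 + 1) (by positivity) hh (by linarith)

theorem exists_lt_kernelInt_near_axis_of_measure_eq_zero (hae : ∀ᵐ s ∂ρ, |s| ≤ R) (hρ : ρ ≠ 0)
    {a c ε : ℝ} (hε : 0 < ε) (hmass : ρ (Ioo (a - ε / 2) (a + ε / 2)) = 0) {p : ℕ → ℝ × ℝ}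
    (hpq : Tendsto p atTop (𝓝 (a, 0)))
    (hF : Tendsto (fun n => uncurry (kernelInt ρ) (p n)) atTop (𝓝 c)) :
    ∃ z : ℝ × ℝ, 0 < z.2 ∧ dist z (a, 0) < ε ∧ c < uncurry (kernelInt ρ) z := by
  have hfar : ∀ᵐ s ∂ρ, ε / 2 ≤ |a - s| := by
    filter_upwards [measure_eq_zero_iff_ae_notMem.1 hmass] with s hs
    rw [mem_Ioo, not_and_or, not_lt, not_lt] at hs
    rcases hs with hs | hs
    · rw [abs_of_nonneg] <;> linarith
    · rw [abs_of_nonpos] <;> linarith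
  have hcont : ∀ x, |x - a| < ε / 2 → ContinuousAt (uncurry (kernelInt ρ)) (x, 0) := by
    refine fun x hx => continuousAt_kernelInt hae (sub_pos.2 hx) ?_
    filter_upwards [hfar] with s hs
    rw [dist_mk_zero]
    linarith [abs_sub_le a x s, abs_sub_comm x a]
  have hc : kernelInt ρ a 0 = c :=
    tendsto_nhds_unique ((hcont a (by simpa using half_pos hε)).tendsto.comp hpq) hF
  obtain ⟨x, hx, hcx⟩ : ∃ x, |x - a| < ε / 2 ∧ c < kernelInt ρ x 0 := by
    have := two_mul_kernelInt_lt_add hae hρ (a := a) (h := ε / 4) (by positivity)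
      (by filter_upwards [hfar] with s hs; linarith)
    by_contra! hle
    linarith [hle (a + ε / 4) (by rw [add_sub_cancel_left, abs_of_pos (by positivity)]; linarith),
      hle (a - ε / 4) (by rw [sub_sub_cancel_left, abs_neg, abs_of_pos (by positivity)]; linarith)]
  have hev : ∀ᶠ z in 𝓝 (x, 0), dist z (a, 0) < ε ∧ c < uncurry (kernelInt ρ) z :=
    (Metric.isOpen_ball.eventually_mem (by rw [Metric.mem_ball, dist_mk_zero]; linarith)).and
      ((hcont x hx).eventually (lt_mem_nhds hcx))
  have hup : Tendsto (fun y : ℝ => (x, y)) (𝓝[>] 0) (𝓝 (x, 0)) :=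
    ((Continuous.prodMk_right x).tendsto 0).mono_left nhdsWithin_le_nhds
  obtain ⟨y, hyz, hy⟩ := ((hup.eventually hev).and self_mem_nhdsWithin).exists
  exact ⟨(x, y), hy, hyz⟩

theorem exists_lt_kernelInt_near_axis (hae : ∀ᵐ s ∂ρ, |s| ≤ R) (hρ : ρ ≠ 0) {a c ε : ℝ}
    (hε : 0 < ε) {p : ℕ → ℝ × ℝ} (hpq : Tendsto p atTop (𝓝 (a, 0)))
    (hF : Tendsto (fun n => uncurry (kernelInt ρ) (p n)) atTop (𝓝 c)) :
    ∃ z : ℝ × ℝ, 0 < z.2 ∧ dist z (a, 0) < ε ∧ c < uncurry (kernelInt ρ) z := by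
  by_cases hmass : ρ (Ioo (a - ε / 2) (a + ε / 2)) = 0
  · exact exists_lt_kernelInt_near_axis_of_measure_eq_zero hae hρ hε hmass hpq hF
  · obtain ⟨x, hx, hgx⟩ := exists_lt_gFn_of_measure_Ioo_ne_zero hmass c
    obtain ⟨y, hy, hyε, hc⟩ := exists_lt_kernelInt_of_lt_gFn hae hgx (half_pos hε)
    refine ⟨(x, y), hy, ?_, hc⟩
    rw [Prod.dist_eq, Real.dist_eq, Real.dist_eq, sub_zero, abs_of_pos hy, max_lt_iff,
      abs_sub_lt_iff]
    exact ⟨⟨by linarith [hx.2], by linarith [hx.1]⟩, by linarith⟩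

theorem exists_kernelInt_lt_near (hae : ∀ᵐ s ∂ρ, |s| ≤ R) (hρ : ρ ≠ 0) {q : ℝ × ℝ} {c ε : ℝ}
    (hε : 0 < ε) {p : ℕ → ℝ × ℝ} (hp : ∀ n, 0 < (p n).2) (hpq : Tendsto p atTop (𝓝 q))
    (hF : Tendsto (fun n => uncurry (kernelInt ρ) (p n)) atTop (𝓝 c)) :
    ∃ z : ℝ × ℝ, 0 < z.2 ∧ dist z q < ε ∧ uncurry (kernelInt ρ) z < c := by
  have hq : 0 ≤ q.2 := ge_of_tendsto hpq.snd_nhds (.of_forall fun n => (hp n).le)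
  have hanti := strictAntiOn_kernelInt hae hρ
  have hy : 0 < q.2 + ε / 2 := by positivity
  have hlim : Tendsto (fun n => kernelInt ρ (p n).1 (q.2 + ε / 2)) atTop
      (𝓝 (kernelInt ρ q.1 (q.2 + ε / 2))) :=
    (continuousAt_kernelInt_of_ne_zero (p₀ := (q.1, q.2 + ε / 2)) hae hy.ne').tendsto.comp
      (hpq.fst_nhds.prodMk_nhds tendsto_const_nhds)
  have hle : kernelInt ρ q.1 (q.2 + ε / 2) ≤ c := by
    refine le_of_tendsto_of_tendsto hlim hF ?_
    filter_upwards [hpq.snd_nhds.eventually (gt_mem_nhds (lt_add_of_pos_right q.2 (half_pos hε)))]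
      with n hn using (hanti _).antitoneOn (hp n) hy hn.le
  refine ⟨(q.1, q.2 + 3 * ε / 4), by dsimp only; positivity, ?_, ?_⟩
  · rw [Prod.dist_eq, dist_self, Real.dist_eq, add_sub_cancel_left, abs_of_pos (by positivity)]
    simp only [max_lt_iff]
    constructor <;> linarith
  · exact (hanti q.1 hy (mem_Ioi.2 (by positivity)) (by linarith)).trans_le hle

theorem exists_lt_kernelInt_near (hae : ∀ᵐ s ∂ρ, |s| ≤ R) (hρ : ρ ≠ 0) {q : ℝ × ℝ} {c ε : ℝ}
    (hε : 0 < ε) {p : ℕ → ℝ × ℝ} (hp : ∀ n, 0 < (p n).2) (hpq : Tendsto p atTop (𝓝 q))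
    (hF : Tendsto (fun n => uncurry (kernelInt ρ) (p n)) atTop (𝓝 c)) :
    ∃ z : ℝ × ℝ, 0 < z.2 ∧ dist z q < ε ∧ c < uncurry (kernelInt ρ) z := by
  obtain ⟨a, b⟩ := q
  rcases (ge_of_tendsto hpq.snd_nhds (.of_forall fun n => (hp n).le)).eq_or_lt with rfl | hb
  · exact exists_lt_kernelInt_near_axis hae hρ hε hpq hF
  change 0 < b at hb
  have hc : kernelInt ρ a b = c :=
    tendsto_nhds_unique ((continuousAt_kernelInt_of_ne_zero hae hb.ne').tendsto.comp hpq) hF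
  have hη : 0 < min (b / 2) (ε / 2) := by positivity
  refine ⟨(a, b - min (b / 2) (ε / 2)), by dsimp only; linarith [min_le_left (b / 2) (ε / 2)],
    ?_, ?_⟩
  · rw [Prod.dist_eq, dist_self, Real.dist_eq, sub_sub_cancel_left, abs_neg, abs_of_pos hη]
    simp only [max_lt_iff]
    constructor <;> linarith [min_le_right (b / 2) (ε / 2)]
  · rw [← hc]
    exact strictAntiOn_kernelInt hae hρ a (mem_Ioi.2 (by linarith [min_le_left (b / 2) (ε / 2)])) hb
      (by linarith)

theorem eventually_exists_mem_levelSet_dist_lt (hae : ∀ᵐ s ∂ρ, |s| ≤ R) (hρ : ρ ≠ 0)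
    {q : ℝ × ℝ} {c ε : ℝ} (hε : 0 < ε) {p : ℕ → ℝ × ℝ} (hp : ∀ n, 0 < (p n).2)
    (hpq : Tendsto p atTop (𝓝 q))
    (hF : Tendsto (fun n => uncurry (kernelInt ρ) (p n)) atTop (𝓝 c)) :
    ∀ᶠ c' in 𝓝 c, ∃ z ∈ levelSet ρ c', dist z q < ε := by
  obtain ⟨z₀, hz₀, hdist₀, hc₀⟩ := exists_kernelInt_lt_near hae hρ hε hp hpq hF
  obtain ⟨z₁, hz₁, hdist₁, hc₁⟩ := exists_lt_kernelInt_near hae hρ hε hp hpq hF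
  set S := Metric.ball q ε ∩ (univ ×ˢ Ioi 0)
  have hS : IsPreconnected S :=
    ((convex_ball q ε).inter (convex_univ.prod (convex_Ioi 0))).isPreconnected
  have hcont : ContinuousOn (uncurry (kernelInt ρ)) S := fun z hz =>
    (continuousAt_kernelInt_of_ne_zero hae (ne_of_gt hz.2.2)).continuousWithinAt
  filter_upwards [Ioo_mem_nhds hc₀ hc₁] with c' hc'
  obtain ⟨z, hz, hzc⟩ := hS.intermediate_value ⟨hdist₀, trivial, hz₀⟩ ⟨hdist₁, trivial, hz₁⟩
    hcont (Ioo_subset_Icc_self hc')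
  exact ⟨z, ⟨hz.2.2, hzc⟩, hz.1⟩

theorem exists_mem_thickening_levelSet (hae : ∀ᵐ s ∂ρ, |s| ≤ R) (hρ : ρ ≠ 0) {c ε : ℝ}
    (hc : 0 < c) (hε : 0 < ε) {a b : ℕ → ℝ} (ha : Tendsto a atTop (𝓝 c))
    (hb : Tendsto b atTop (𝓝 c)) {p : ℕ → ℝ × ℝ} (hp : ∀ n, p n ∈ levelSet ρ (a n)) :
    ∃ n, p n ∈ Metric.thickening ε (levelSet ρ (b n)) := by
  have hfreq : ∃ᶠ n in atTop, p n ∈ closure {z | c / 2 ≤ uncurry (kernelInt ρ) z} := by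
    refine (ha.eventually (lt_mem_nhds (half_lt_self hc))).frequently.mono fun n hn => ?_
    exact subset_closure (show c / 2 ≤ kernelInt ρ (p n).1 (p n).2 from (hp n).2 ▸ hn.le)
  obtain ⟨q, -, φ, hφ, hpq⟩ :=
    (isBounded_setOf_le_kernelInt hae (half_pos hc)).isCompact_closure.tendsto_subseq' hfreq
  have hF : Tendsto (fun n => uncurry (kernelInt ρ) ((p ∘ φ) n)) atTop (𝓝 c) :=
    (ha.comp hφ.tendsto_atTop).congr fun n => ((hp (φ n)).2).symm
  obtain ⟨n, ⟨z, hz, hzq⟩, hpn⟩ := (((hb.comp hφ.tendsto_atTop).eventually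
    (eventually_exists_mem_levelSet_dist_lt hae hρ (half_pos hε) (fun n => (hp (φ n)).1) hpq
      hF)).and (hpq.eventually (Metric.ball_mem_nhds q (half_pos hε)))).exists
  refine ⟨φ n, Metric.mem_thickening_iff.2 ⟨z, hz, ?_⟩⟩
  linarith [dist_triangle (p (φ n)) q z, dist_comm z q,
    (Metric.mem_ball.1 hpn : dist (p (φ n)) q < ε / 2)]

theorem eventually_levelSet_subset_thickening (hae : ∀ᵐ s ∂ρ, |s| ≤ R) (hρ : ρ ≠ 0) {c ε : ℝ}
    (hc : 0 < c) (hε : 0 < ε) :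
    ∀ᶠ c' in 𝓝 c, levelSet ρ c' ⊆ Metric.thickening ε (levelSet ρ c) ∧
      levelSet ρ c ⊆ Metric.thickening ε (levelSet ρ c') := by
  refine eventually_and.2 ⟨?_, ?_⟩ <;> by_contra h <;>
    obtain ⟨a, ha, hbad⟩ := exists_seq_forall_of_frequently (not_eventually.1 h) <;>
    choose p hp hpfar using fun n => not_subset.1 (hbad n)
  · obtain ⟨n, hn⟩ := exists_mem_thickening_levelSet hae hρ hc hε ha tendsto_const_nhds hp
    exact hpfar n hn
  · obtain ⟨n, hn⟩ := exists_mem_thickening_levelSet hae hρ hc hε tendsto_const_nhds ha hp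
    exact hpfar n hn

end kernelInt

theorem graphs_hausdorff_continuous_general (ρ : Measure ℝ) [IsFiniteMeasure ρ] (hρ : ρ ≠ 0)
    (K : Set ℝ) (hK : IsCompact K) (hρK : ρ Kᶜ = 0) :
    ∀ t : ℝ, 1 < t → ∀ ε : ℝ, 0 < ε → ∃ δ : ℝ, 0 < δ ∧
      ∀ r : ℝ, 1 < r → |r - t| < δ →
        graphF ρ r ⊆ thick2 ε (graphF ρ t) ∧ graphF ρ t ⊆ thick2 ε (graphF ρ r) := by
  intro t ht ε hε
  obtain ⟨R, hae⟩ := hK.exists_ae_abs_le hρK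
  have hlevel : Tendsto (fun r : ℝ => 1 / (r - 1)) (𝓝 t) (𝓝 (1 / (t - 1))) :=
    ContinuousAt.tendsto (by fun_prop (disch := exact (sub_pos.2 ht).ne'))
  obtain ⟨δ, hδ, hnear⟩ := Metric.eventually_nhds_iff.1 (hlevel.eventually
    (eventually_levelSet_subset_thickening hae hρ (one_div_pos.2 (sub_pos.2 ht)) (half_pos hε)))
  refine ⟨δ, hδ, fun r hr hrt => ?_⟩
  obtain ⟨h₁, h₂⟩ := hnear (by rwa [Real.dist_eq])
  rw [graphF_eq_levelSet hae hρ hr, graphF_eq_levelSet hae hρ ht]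
  exact ⟨h₁.trans (thickening_half_subset_thick2 _), h₂.trans (thickening_half_subset_thick2 _)⟩

/-- Hausdorff continuity of the graphs of `f_t`, assuming `ρ` has only
finitely many atoms. -/
theorem graphs_hausdorff_continuous (ρ : Measure ℝ) [IsFiniteMeasure ρ] (hρ : ρ ≠ 0)
    (K : Set ℝ) (hK : IsCompact K) (hρK : ρ Kᶜ = 0)
    (hatoms : {a : ℝ | 0 < ρ {a}}.Finite) :
    ∀ t : ℝ, 1 < t → ∀ ε : ℝ, 0 < ε → ∃ δ : ℝ, 0 < δ ∧
      ∀ r : ℝ, 1 < r → |r - t| < δ →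
        graphF ρ r ⊆ thick2 ε (graphF ρ t) ∧ graphF ρ t ⊆ thick2 ε (graphF ρ r) :=
  graphs_hausdorff_continuous_general ρ hρ K hK hρK
end

section
/- Vanishing-atom limit: let r > 1 and let μ be a Borel probability measure on ℝ with μ({0}) = (r−1)/r. Let G_μ(z) = ∫_ℝ 1/(z−s) dμ(s) for z in the upper half-plane ℂ⁺ (note G_μ(z) ≠ 0 there), and let F_μ = 1/G_μ. Suppose α ∈ ℝ and a finite Borel measure ρ on ℝ satisfy the Nevanlinna representation F_μ(z) = α + z + ∫_ℝ (1 + s z)/(s − z) dρ(s) for all z ∈ ℂ⁺. Then lim_{y → 0⁺} ∫_ℝ (s²+1)/(s² + y²) dρ(s) = 1/(r−1). -/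
open MeasureTheory Complex Filter Topology

/-!
On the imaginary axis `z = i y`, the representation gives `Im F_μ(i y) = y (1 + ∫ (s²+1)/(s²+y²) dρ)`,
so the integral equals `Re (1 / (i y G_μ(i y))) - 1`. By dominated convergence (the integrand
`i y / (i y - s)` has modulus at most `1`), `i y G_μ(i y)` tends to the atom `μ {0} = (r-1)/r`,
whence the limit `r/(r-1) - 1 = 1/(r-1)`.
-/

theorem tendsto_I_mul_div_I_mul_sub (s : ℝ) :
    Tendsto (fun y : ℝ => I * y / (I * y - s)) (𝓝[≠] 0)
      (𝓝 (({0} : Set ℝ).indicator 1 s)) := by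
  rcases eq_or_ne s 0 with rfl | hs
  · refine tendsto_const_nhds.congr' ?_
    filter_upwards [self_mem_nhdsWithin] with y hy
    have : I * y ≠ 0 := mul_ne_zero I_ne_zero (ofReal_ne_zero.mpr hy)
    simp [div_self this]
  · have hcont : ContinuousAt (fun y : ℝ => I * y / (I * y - s)) 0 :=
      ContinuousAt.div (by fun_prop) (by fun_prop) (by simpa using hs)
    simpa [hs] using hcont.tendsto.mono_left nhdsWithin_le_nhds

theorem norm_I_mul_div_I_mul_sub_le_one (y s : ℝ) : ‖I * y / (I * y - s)‖ ≤ 1 := by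
  rw [norm_div]
  refine div_le_one_of_le₀ ?_ (norm_nonneg _)
  simpa using abs_im_le_norm (I * y - s)

theorem tendsto_I_mul_mul_integral_inv_sub (μ : Measure ℝ) [IsFiniteMeasure μ] :
    Tendsto (fun y : ℝ => I * y * ∫ s, 1 / (I * y - s) ∂μ) (𝓝[≠] 0) (𝓝 (μ.real {0})) := by
  have hatom : ∫ s, ({0} : Set ℝ).indicator (1 : ℝ → ℂ) s ∂μ = μ.real {0} := by
    change ∫ s, ({0} : Set ℝ).indicator (fun _ => (1 : ℂ)) s ∂μ = _
    rw [integral_indicator_const (1 : ℂ) (measurableSet_singleton 0)]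
    simp
  simp_rw [← integral_const_mul, mul_one_div, ← hatom]
  refine tendsto_integral_filter_of_dominated_convergence (fun _ => 1)
    (Eventually.of_forall fun y => Measurable.aestronglyMeasurable (by fun_prop))
    (Eventually.of_forall fun y => Eventually.of_forall (norm_I_mul_div_I_mul_sub_le_one y))
    (integrable_const 1) (Eventually.of_forall tendsto_I_mul_div_I_mul_sub)

theorem im_one_add_mul_I_mul_div_sub (s y : ℝ) :
    ((1 + s * (I * y)) / (s - I * y)).im = y * ((s ^ 2 + 1) / (s ^ 2 + y ^ 2)) := by
  simp only [div_im, normSq_apply, add_re, add_im, sub_re, sub_im, mul_re, mul_im, one_re, one_im,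
    ofReal_re, ofReal_im, I_re, I_im]
  ring

theorem norm_one_add_mul_I_mul_div_sub_le {y : ℝ} (hy : 0 < y) (s : ℝ) :
    ‖(1 + s * (I * y)) / (s - I * y)‖ ≤ y + y⁻¹ := by
  have hre : |s| ≤ ‖(s : ℂ) - I * y‖ := by simpa using abs_re_le_norm ((s : ℂ) - I * y)
  have him : y ≤ ‖(s : ℂ) - I * y‖ := by simpa [abs_of_pos hy] using abs_im_le_norm ((s : ℂ) - I * y)
  have hnum : ‖1 + s * (I * y)‖ ≤ 1 + |s| * y := by
    simpa [abs_of_pos hy] using norm_add_le (1 : ℂ) (s * (I * y))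
  rw [norm_div, div_le_iff₀ (hy.trans_le him)]
  calc ‖1 + s * (I * y)‖ ≤ 1 + |s| * y := hnum
    _ ≤ y⁻¹ * ‖(s : ℂ) - I * y‖ + y * ‖(s : ℂ) - I * y‖ := by
      refine add_le_add ((le_inv_mul_iff₀ hy).mpr (by simpa using him)) ?_
      linarith [mul_le_mul_of_nonneg_right hre hy.le]
    _ = (y + y⁻¹) * ‖(s : ℂ) - I * y‖ := by ring

theorem im_integral_one_add_mul_I_mul_div_sub (ρ : Measure ℝ) [IsFiniteMeasure ρ] {y : ℝ}
    (hy : 0 < y) :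
    (∫ s, (1 + s * (I * y)) / (s - I * y) ∂ρ).im = y * ∫ s, (s ^ 2 + 1) / (s ^ 2 + y ^ 2) ∂ρ := by
  have hint : Integrable (fun s : ℝ => (1 + s * (I * y)) / (s - I * y)) ρ :=
    Integrable.of_bound (Measurable.aestronglyMeasurable (by fun_prop)) (y + y⁻¹)
      (Eventually.of_forall (norm_one_add_mul_I_mul_div_sub_le hy))
  rw [← imCLM_apply, ← ContinuousLinearMap.integral_comp_comm _ hint]
  simp only [imCLM_apply, im_one_add_mul_I_mul_div_sub]
  exact integral_const_mul y _

theorem re_inv_I_mul_mul (y : ℝ) (w : ℂ) : (I * y * w)⁻¹.re = w⁻¹.im / y := by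
  have : (I * y * w)⁻¹ = -I * ((y⁻¹ : ℝ) * w⁻¹) := by
    rw [mul_inv, mul_inv, inv_I, ofReal_inv]; ring
  rw [this, neg_mul, neg_re, I_mul_re, neg_neg, im_ofReal_mul, div_eq_inv_mul]

/-- vanishing-atom limit. Let `r > 1` and let `μ` be a probability
measure with `μ({0}) = (r−1)/r`. If `F_μ = 1/G_μ` (with `G_μ` the Cauchy transform)
admits a Nevanlinna representation with data `(α, ρ)`, then
`∫ (s²+1)/(s² + y²) dρ(s) → 1/(r−1)` as `y → 0⁺`. -/
theorem vanishing_atom_limit (r : ℝ) (hr : 1 < r)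
    (μ : Measure ℝ) [IsProbabilityMeasure μ]
    (hatom : μ {0} = ENNReal.ofReal ((r - 1) / r))
    (α : ℝ) (ρ : Measure ℝ) [IsFiniteMeasure ρ]
    (hF : ∀ z : ℂ, 0 < z.im →
      (∫ s, (1 : ℂ) / (z - (s : ℂ)) ∂μ)⁻¹
        = (α : ℂ) + z + ∫ s, (1 + (s : ℂ) * z) / ((s : ℂ) - z) ∂ρ) :
    Tendsto (fun y : ℝ => ∫ s, (s ^ 2 + 1) / (s ^ 2 + y ^ 2) ∂ρ)
      (nhdsWithin 0 (Set.Ioi 0)) (nhds (1 / (r - 1))) := by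
  have hc : 0 < (r - 1) / r := div_pos (by linarith) (by linarith)
  have hatom_real : μ.real {0} = (r - 1) / r := by
    rw [measureReal_def, hatom, ENNReal.toReal_ofReal hc.le]
  have hlim : Tendsto (fun y : ℝ => (I * y * ∫ s, 1 / (I * y - s) ∂μ)⁻¹.re - 1) (𝓝[>] 0)
      (𝓝 (((((r - 1) / r : ℝ) : ℂ)⁻¹).re - 1)) := by
    refine Tendsto.sub_const ?_ 1
    refine (continuous_re.tendsto _).comp (Tendsto.inv₀ ?_ (by exact_mod_cast hc.ne'))
    simpa [hatom_real] using (tendsto_I_mul_mul_integral_inv_sub μ).mono_left (nhdsGT_le_nhdsNE 0)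
  have hlim_val : ((((r - 1) / r : ℝ) : ℂ)⁻¹).re - 1 = 1 / (r - 1) := by
    rw [← ofReal_inv, ofReal_re]
    field_simp [(by linarith : r - 1 ≠ 0)]
    ring
  rw [hlim_val] at hlim
  refine hlim.congr' ?_
  filter_upwards [self_mem_nhdsWithin] with y (hy : 0 < y)
  rw [re_inv_I_mul_mul, hF _ (by simpa using hy), add_im, add_im,
    im_integral_one_add_mul_I_mul_div_sub ρ hy]
  field_simp
  simp
end
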